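/- arXiv:2108.00991 — 5 statements merged into one kernel-verified Lean document; each statement's English description precedes it below -/
import Mathlib

section
/- For every even integer k ≥ 4, each of the colorings χ(k, k/2 − 1) and χ(k−1, k/2) of the complete graph on k − 1 + k/2 vertices contains exactly k!/2 monochromatic copies of the path P_k. -/
open Finset

/-- A path copy as a sequence: `k` distinct vertices with consecutive vertices adjacent. -/
def IsPathSeq {V : Type*} (G : SimpleGraph V) (k : ℕ) (f : Fin k → V) : Prop :=
  Function.Injective f ∧ ∀ (i : Fin k) (h : i.val + 1 < k), G.Adj (f i) (f ⟨i.val + 1, h⟩)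

/-- Number of copies of the path `P_k` in `G` (sequences identified with their reversals). -/
noncomputable def pathCount {V : Type*} (G : SimpleGraph V) (k : ℕ) : ℕ :=
  Nat.card {f : Fin k → V // IsPathSeq G k f} / 2

/-- A cycle copy as a cyclic sequence: `k` distinct vertices, cyclically consecutive adjacent. -/
def IsCycleSeq {V : Type*} (G : SimpleGraph V) (k : ℕ) (f : Fin k → V) : Prop :=
  Function.Injective f ∧ ∀ i : Fin k, G.Adj (f i) (f ⟨(i.val + 1) % k, Nat.mod_lt _ i.pos⟩)

/-- Number of copies of the cycle `C_k` in `G` (identified up to rotation and reflection). -/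
noncomputable def cycleCount {V : Type*} (G : SimpleGraph V) (k : ℕ) : ℕ :=
  Nat.card {f : Fin k → V // IsCycleSeq G k f} / (2 * k)

/-- The red graph of the coloring `χ(a,b)`: complete bipartite between the first `a`
vertices and the remaining `b` vertices. The blue graph is its complement. -/
def chiRed (a b : ℕ) : SimpleGraph (Fin (a + b)) :=
  SimpleGraph.fromRel (fun x y => (x.val < a) ≠ (y.val < a))

/-- Number of neighbors of `x` inside the set `Y`. -/
noncomputable def nbrCount {V : Type*} (G : SimpleGraph V) (x : V) (Y : Finset V) : ℕ :=
  Nat.card {y : V // y ∈ Y ∧ G.Adj x y}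

/-- `e(X,Y)`: number of pairs in `X × Y` that are edges. -/
noncomputable def eCnt {V : Type*} (G : SimpleGraph V) (X Y : Finset V) : ℕ :=
  Nat.card {p : V × V // p.1 ∈ X ∧ p.2 ∈ Y ∧ G.Adj p.1 p.2}

/-- Edge density `d(X,Y) = e(X,Y)/(|X||Y|)`. -/
noncomputable def dens {V : Type*} (G : SimpleGraph V) (X Y : Finset V) : ℝ :=
  (eCnt G X Y : ℝ) / ((X.card : ℝ) * (Y.card : ℝ))

/-- `(X,Y)` is an `ε`-regular pair in `G`. -/
def IsRegularPair {V : Type*} (G : SimpleGraph V) (X Y : Finset V) (ε : ℝ) : Prop :=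
  ∀ U, U ⊆ X → ∀ W, W ⊆ Y → ε * X.card ≤ (U.card : ℝ) → ε * Y.card ≤ (W.card : ℝ) →
    |dens G U W - dens G X Y| ≤ ε

/-- `W` is `(t,l)`-well-connected in `G`: any two distinct vertices of `W` are joined by
at least `t` internally vertex-disjoint paths of length at most `l`. -/
def WellConnected {V : Type*} (G : SimpleGraph V) (W : Set V) (t l : ℕ) : Prop :=
  ∀ u ∈ W, ∀ v ∈ W, u ≠ v →
    ∃ P : Fin t → G.Walk u v, Function.Injective P ∧
      (∀ i, (P i).IsPath ∧ (P i).length ≤ l) ∧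
      (∀ i j, i ≠ j → ∀ x, x ∈ (P i).support → x ∈ (P j).support → x = u ∨ x = v)

/-- Extremal coloring with parameter `α` (the red graph is `R`, blue is `Rᶜ`). -/
def IsExtremalColoring {V : Type*} [Fintype V] [DecidableEq V] (R : SimpleGraph V) (α : ℝ) : Prop :=
  ∃ A : Finset V,
    (2/3 - α) * (Fintype.card V : ℝ) ≤ (A.card : ℝ) ∧
    (1/3 - α) * (Fintype.card V : ℝ) ≤ ((Aᶜ).card : ℝ) ∧
    ((1 - α ≤ dens R A A ∧ 1 - α ≤ dens Rᶜ A Aᶜ) ∨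
     (1 - α ≤ dens Rᶜ A A ∧ 1 - α ≤ dens R A Aᶜ))

/-- A path of length `l` in `G[A,B]`: `l+1` distinct vertices alternating between the
parts `A` and `B`, with consecutive vertices adjacent in `G`. -/
def IsAltPath {Ω : Type*} (G : SimpleGraph Ω) (A B : Finset Ω) (l : ℕ) (f : Fin (l + 1) → Ω) : Prop :=
  Function.Injective f ∧
  (∀ i : Fin (l + 1), f i ∈ A ∨ f i ∈ B) ∧
  (∀ (i : Fin (l + 1)) (h : i.val + 1 < l + 1),
    G.Adj (f i) (f ⟨i.val + 1, h⟩) ∧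
    ((f i ∈ A ∧ f ⟨i.val + 1, h⟩ ∈ B) ∨ (f i ∈ B ∧ f ⟨i.val + 1, h⟩ ∈ A)))

/-- A path with `k` vertices alternating between `V` and `U`, starting in `V`. -/
def IsBipPathFromV {Ω : Type*} (G : SimpleGraph Ω) (U V : Finset Ω) (k : ℕ) (f : Fin k → Ω) : Prop :=
  Function.Injective f ∧
  (∀ i : Fin k, (i.val % 2 = 0 → f i ∈ V) ∧ (i.val % 2 = 1 → f i ∈ U)) ∧
  (∀ (i : Fin k) (h : i.val + 1 < k), G.Adj (f i) (f ⟨i.val + 1, h⟩))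


/-!
A red path in `χ(a,b)` alternates between the two parts and a blue path stays inside one part,
so both kinds are injective sequences with a prescribed pattern of parts, counted by products
of falling factorials `(n)_j`. For `k = 2m` there are `2 (a)_m (b)_m` red and
`(a)_{2m} + (b)_{2m}` blue sequences. In `χ(2m, m-1)` only the `(2m)!` blue orderings of the
big part remain; in `χ(2m-1, m)` only the red ones remain, and `2 (2m-1)_m m! = (2m)!`.
-/

open Function

section Sides

variable {ι V : Type*}

def injectiveSidesEquiv (c : ι → Prop) (p : V → Prop) [DecidablePred c] :
    {f : ι → V // Injective f ∧ ∀ i, p (f i) ↔ c i} ≃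
      ({i // c i} ↪ {v // p v}) × ({i // ¬ c i} ↪ {v // ¬ p v}) where
  toFun f :=
    (⟨fun i => ⟨f.1 i, (f.2.2 i).2 i.2⟩,
        fun _ _ h => Subtype.ext (f.2.1 (congrArg Subtype.val h))⟩,
      ⟨fun i => ⟨f.1 i, mt (f.2.2 i).1 i.2⟩,
        fun _ _ h => Subtype.ext (f.2.1 (congrArg Subtype.val h))⟩)
  invFun gh :=
    ⟨Sum.elim (Subtype.val ∘ gh.1) (Subtype.val ∘ gh.2) ∘ (Equiv.sumCompl c).symm, by
      refine ⟨((Subtype.val_injective.comp gh.1.injective).sumElim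
        (Subtype.val_injective.comp gh.2.injective)
          fun i j h => (gh.2 j).2 ((congrArg p h).mp (gh.1 i).2)).comp (Equiv.injective _),
        fun i => ?_⟩
      by_cases hi : c i <;> simp [hi, (gh.1 _).2, (gh.2 _).2]⟩
  left_inv f := by
    ext i
    by_cases hi : c i <;> simp [hi] <;> rfl
  right_inv gh := by
    ext i <;> simp

theorem Nat.card_injective_sides [Finite ι] [Finite V] (c : ι → Prop) (p : V → Prop) :
    Nat.card {f : ι → V // Injective f ∧ ∀ i, p (f i) ↔ c i} =
      (Nat.card {v // p v}).descFactorial (Nat.card {i // c i}) *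
        (Nat.card {v // ¬ p v}).descFactorial (Nat.card {i // ¬ c i}) := by
  classical
  have := Fintype.ofFinite ι
  have := Fintype.ofFinite V
  rw [Nat.card_congr (injectiveSidesEquiv c p), Nat.card_prod]
  simp only [Nat.card_eq_fintype_card, Fintype.card_embedding_eq]

theorem Nat.card_injective_forall [Finite ι] [Finite V] (p : V → Prop) :
    Nat.card {f : ι → V // Injective f ∧ ∀ i, p (f i)} =
      (Nat.card {v // p v}).descFactorial (Nat.card ι) := by
  simpa using Nat.card_injective_sides (fun _ : ι => True) p

end Sides

theorem Nat.card_subtype_or_of_disjoint {α : Type*} [Finite α] {p q : α → Prop}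
    (h : ∀ x, p x → ¬ q x) :
    Nat.card {x // p x ∨ q x} = Nat.card {x // p x} + Nat.card {x // q x} := by
  classical
  rw [Nat.card_congr (subtypeOrEquiv p q (Pi.disjoint_iff.2 fun x => Prop.disjoint_iff.2
    fun hx => h x hx.1 hx.2)), Nat.card_sum]

namespace Fin

section Sequences

variable {k : ℕ} {q : Fin k → Prop}

theorem forall_succ_iff_not_iff :
    (∀ (i : Fin k) (hi : i.val + 1 < k), q ⟨i.val + 1, hi⟩ ↔ ¬ q i) ↔
      (∀ i, q i ↔ Even i.val) ∨ ∀ i, q i ↔ ¬ Even i.val := by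
  refine ⟨fun h => ?_, ?_⟩
  · cases k with
    | zero => exact Or.inl fun i => i.elim0
    | succ n =>
      have key : ∀ i : Fin (n + 1), q i ↔ (q 0 ↔ Even i.val) := by
        intro i
        induction i using Fin.induction with
        | zero => simp
        | succ i ih =>
          have hs : q i.succ ↔ ¬ q i.castSucc := h i.castSucc (by simp)
          rw [hs, ih, val_succ, Nat.even_add_one, val_castSucc]
          tauto
      by_cases h0 : q 0
      · exact Or.inl fun i => by simpa [h0] using key i
      · exact Or.inr fun i => by simpa [h0] using key i
  · rintro (h | h) i hi <;> simp only [h, Nat.even_add_one, not_not]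

theorem forall_succ_iff_iff :
    (∀ (i : Fin k) (hi : i.val + 1 < k), q ⟨i.val + 1, hi⟩ ↔ q i) ↔
      (∀ i, q i) ∨ ∀ i, ¬ q i := by
  refine ⟨fun h => ?_, ?_⟩
  · cases k with
    | zero => exact Or.inl fun i => i.elim0
    | succ n =>
      have key : ∀ i : Fin (n + 1), q i ↔ q 0 := by
        intro i
        induction i using Fin.induction with
        | zero => rfl
        | succ i ih => exact (h i.castSucc (by simp)).trans ih
      by_cases h0 : q 0
      · exact Or.inl fun i => (key i).2 h0
      · exact Or.inr fun i => mt (key i).1 h0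
  · rintro (h | h) i hi <;> simp [h]

end Sequences

theorem card_even_val (m : ℕ) : Nat.card {i : Fin (m + m) // Even i.val} = m :=
  Nat.card_eq_of_equiv_fin
    { toFun i := ⟨i.1 / 2, by omega⟩
      invFun j := ⟨⟨j + j, by omega⟩, ⟨j, rfl⟩⟩
      left_inv := fun ⟨i, r, hr⟩ => by ext; simp only; omega
      right_inv j := by ext; simp only; omega }

theorem card_not_even_val (m : ℕ) : Nat.card {i : Fin (m + m) // ¬ Even i.val} = m :=
  Nat.card_eq_of_equiv_fin
    { toFun i := ⟨i.1 / 2, by omega⟩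
      invFun j := ⟨⟨j + j + 1, by omega⟩, by simp⟩
      left_inv := fun ⟨i, hi⟩ => by
        obtain ⟨r, hr⟩ := Nat.not_even_iff_odd.1 hi
        ext; simp only; omega
      right_inv j := by ext; simp only; omega }

theorem card_val_lt (a b : ℕ) : Nat.card {x : Fin (a + b) // x.val < a} = a := by
  rw [Nat.card_eq_fintype_card, Fintype.card_subtype, card_filter_val_lt]
  omega

theorem card_not_val_lt (a b : ℕ) : Nat.card {x : Fin (a + b) // ¬ x.val < a} = b := by
  rw [Nat.card_eq_fintype_card, Fintype.card_subtype_compl, Fintype.card_fin,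
    ← Nat.card_eq_fintype_card, card_val_lt]
  omega

end Fin

section CompleteBipartiteOn

variable {V : Type*}

def completeBipartiteOn (p : V → Prop) : SimpleGraph V :=
  SimpleGraph.fromRel fun x y => p x ≠ p y

variable {p : V → Prop}

theorem completeBipartiteOn_adj {x y : V} :
    (completeBipartiteOn p).Adj x y ↔ (p y ↔ ¬ p x) := by
  simp only [completeBipartiteOn, SimpleGraph.fromRel_adj, ne_eq, eq_iff_iff]
  constructor
  · rintro ⟨-, h | h⟩ <;> tauto
  · intro h
    exact ⟨fun hxy => by subst hxy; tauto, Or.inl (by tauto)⟩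

theorem compl_completeBipartiteOn_adj {x y : V} :
    (completeBipartiteOn p)ᶜ.Adj x y ↔ x ≠ y ∧ (p y ↔ p x) := by
  rw [SimpleGraph.compl_adj, completeBipartiteOn_adj]
  tauto

theorem isPathSeq_completeBipartiteOn_iff {k : ℕ} {f : Fin k → V} :
    IsPathSeq (completeBipartiteOn p) k f ↔
      Injective f ∧ ((∀ i, p (f i) ↔ Even i.val) ∨ ∀ i, p (f i) ↔ ¬ Even i.val) := by
  simp only [IsPathSeq, completeBipartiteOn_adj]
  exact and_congr_right fun _ => Fin.forall_succ_iff_not_iff (q := fun i => p (f i))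

theorem isPathSeq_compl_completeBipartiteOn_iff {k : ℕ} {f : Fin k → V} :
    IsPathSeq (completeBipartiteOn p)ᶜ k f ↔
      Injective f ∧ ((∀ i, p (f i)) ∨ ∀ i, ¬ p (f i)) := by
  simp only [IsPathSeq, compl_completeBipartiteOn_adj]
  refine and_congr_right fun hf => Iff.trans ?_ Fin.forall_succ_iff_iff
  exact forall₂_congr fun i hi => and_iff_right (hf.ne (by simp [Fin.ext_iff]))

variable [Finite V]

theorem card_isPathSeq_completeBipartiteOn {m : ℕ} (hm : 0 < m) :
    Nat.card {f : Fin (m + m) → V // IsPathSeq (completeBipartiteOn p) (m + m) f} =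
      2 * ((Nat.card {v // p v}).descFactorial m * (Nat.card {v // ¬ p v}).descFactorial m) := by
  simp only [isPathSeq_completeBipartiteOn_iff, and_or_left]
  rw [Nat.card_subtype_or_of_disjoint, Nat.card_injective_sides, Nat.card_injective_sides]
  · simp only [not_not, Fin.card_even_val, Fin.card_not_even_val]
    ring
  rintro f ⟨-, h⟩ ⟨-, h'⟩
  exact ((h ⟨0, by omega⟩).symm.trans (h' ⟨0, by omega⟩)).1 Even.zero Even.zero

theorem card_isPathSeq_compl_completeBipartiteOn {k : ℕ} (hk : 0 < k) :
    Nat.card {f : Fin k → V // IsPathSeq (completeBipartiteOn p)ᶜ k f} =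
      (Nat.card {v // p v}).descFactorial k + (Nat.card {v // ¬ p v}).descFactorial k := by
  simp only [isPathSeq_compl_completeBipartiteOn_iff, and_or_left]
  rw [Nat.card_subtype_or_of_disjoint, Nat.card_injective_forall,
    Nat.card_injective_forall (p := (¬ p ·)), Nat.card_eq_fintype_card (α := Fin k),
    Fintype.card_fin]
  rintro f ⟨-, h⟩ ⟨-, h'⟩
  exact h' ⟨0, hk⟩ (h ⟨0, hk⟩)

end CompleteBipartiteOn

theorem chiRed_eq_completeBipartiteOn (a b : ℕ) :
    chiRed a b = completeBipartiteOn fun x : Fin (a + b) => x.val < a :=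
  rfl

theorem pathCount_chiRed_add_pathCount_compl (a b : ℕ) {m : ℕ} (hm : 0 < m) :
    pathCount (chiRed a b) (m + m) + pathCount (chiRed a b)ᶜ (m + m) =
      a.descFactorial m * b.descFactorial m +
        (a.descFactorial (m + m) + b.descFactorial (m + m)) / 2 := by
  rw [pathCount, pathCount, chiRed_eq_completeBipartiteOn,
    card_isPathSeq_completeBipartiteOn hm, card_isPathSeq_compl_completeBipartiteOn (by omega),
    Fin.card_val_lt, Fin.card_not_val_lt]
  omega

theorem Nat.two_mul_descFactorial_mul_factorial {m : ℕ} (hm : 0 < m) :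
    2 * ((m + m - 1).descFactorial m * m.factorial) = (m + m).factorial := by
  have h := Nat.factorial_mul_descFactorial (show m ≤ m + m - 1 by omega)
  rw [show m + m - 1 - m = m - 1 by omega] at h
  rw [← Nat.mul_factorial_pred hm.ne', ← Nat.mul_factorial_pred (n := m + m) (by omega), ← h]
  ring

/-- For even `k ≥ 4`, each of the colorings `χ(k, k/2-1)` and `χ(k-1, k/2)`
of the complete graph on `k - 1 + k/2` vertices contains exactly `k!/2` monochromatic
copies of the path `P_k`. -/
theorem chi_path_count_even (k : ℕ) (hk : 4 ≤ k) (hke : Even k) :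
    pathCount (chiRed k (k / 2 - 1)) k + pathCount (chiRed k (k / 2 - 1))ᶜ k
      = k.factorial / 2 ∧
    pathCount (chiRed (k - 1) (k / 2)) k + pathCount (chiRed (k - 1) (k / 2))ᶜ k
      = k.factorial / 2 := by
  obtain ⟨m, rfl⟩ := hke
  have hm : 0 < m := by omega
  rw [show (m + m) / 2 = m by omega, pathCount_chiRed_add_pathCount_compl _ _ hm,
    pathCount_chiRed_add_pathCount_compl _ _ hm]
  have := Nat.two_mul_descFactorial_mul_factorial hm
  simp only [Nat.descFactorial_self, Nat.descFactorial_of_lt (show m - 1 < m by omega),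
    Nat.descFactorial_of_lt (show m - 1 < m + m by omega),
    Nat.descFactorial_of_lt (show m < m + m by omega),
    Nat.descFactorial_of_lt (show m + m - 1 < m + m by omega)]
  omega
end

section
/- Let k ≥ 6 be even. Consider the two-coloring of the complete graph on 3k/2 − 1 vertices with vertex set A ∪ B, |A| = k, |B| = k/2 − 1, in which all edges inside B are blue, all edges between A and B are red, one fixed edge e inside A is red, and all other edges inside A are blue. Then this coloring contains no monochromatic red copy of the cycle C_k, and the total number of monochromatic copies of C_k is exactly ((k−3)/2)·(k−2)!, all of them blue. -/
open Finset

/-!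
Apart from `uv`, every red edge joins `A` to `B`. A cyclic sequence meets `B` in at most
`|B| = k/2 - 1` positions and each of them accounts for at most two crossing edges, while `uv`
occurs at most once, so a red `C_k` would have at most `2|B| + 1 < k` edges.
Blue edges never cross and `|B| < k`, so the blue `C_k` are the Hamiltonian cycles of `K_A`
avoiding `uv`. A cyclic ordering of `A` with `u, v` adjacent is determined by the (unique, as
`k ≥ 3`) position of that edge, its orientation and an ordering of the other `k - 2` vertices;
this leaves `k! - 2k(k-2)!` blue cyclic sequences, i.e. `(k-3)(k-2)!/2` copies.
-/

open Function

namespace Fin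

variable {k : ℕ} [NeZero k]

open Fin.NatCast in
theorem apply_eq_apply_zero_of_apply_add_one {β : Sort*} {c : Fin k → β}
    (h : ∀ i, c (i + 1) = c i) (i : Fin k) : c i = c 0 := by
  have key : ∀ n : ℕ, c (n : Fin k) = c 0 := by
    intro n
    induction n with
    | zero => rw [Nat.cast_zero]
    | succ n ih => rw [Nat.cast_succ, h, ih]
  simpa only [Fin.cast_val_eq_self] using key i

theorem card_filter_not_mem_iff_add_one_mem_le (S : Finset (Fin k)) :
    #{i | ¬(i ∈ S ↔ i + 1 ∈ S)} ≤ 2 * #S := by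
  calc #{i | ¬(i ∈ S ↔ i + 1 ∈ S)}
      ≤ #(S ∪ S.image (· - 1)) := by
        refine Finset.card_le_card fun i hi => ?_
        simp only [Finset.mem_filter, Finset.mem_univ, true_and] at hi
        by_cases hiS : i ∈ S
        · exact Finset.mem_union_left _ hiS
        · exact Finset.mem_union_right _
            (Finset.mem_image.mpr ⟨i + 1, by tauto, add_sub_cancel_right i 1⟩)
    _ ≤ #S + #(S.image (· - 1)) := Finset.card_union_le _ _
    _ ≤ 2 * #S := by have := Finset.card_image_le (s := S) (f := (· - 1)); omega

theorem one_add_one_ne_zero (hk : 3 ≤ k) : (1 + 1 : Fin k) ≠ 0 := by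
  rw [Ne, Fin.ext_iff, Fin.val_add, Fin.val_one', Fin.val_zero,
    Nat.mod_eq_of_lt (by omega : 1 < k), Nat.mod_eq_of_lt (by omega : 1 + 1 < k)]
  omega

theorem injective_sym2_mk_apply_add_one (hk : 3 ≤ k) {α : Type*} {g : Fin k → α}
    (hg : Injective g) : Injective fun i => s(g i, g (i + 1)) := by
  intro i j hij
  rcases Sym2.eq_iff.mp hij with ⟨hi, -⟩ | ⟨hi, hj⟩
  · exact hg hi
  · have hi : i = i + 1 + 1 := by
      have := hg hi
      rwa [← hg hj] at this
    refine absurd ?_ (one_add_one_ne_zero hk)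
    simpa [add_assoc] using congrArg (· - i) hi.symm

end Fin

theorem isCycleSeq_iff {V : Type*} {G : SimpleGraph V} {k : ℕ} [NeZero k] {f : Fin k → V} :
    IsCycleSeq G k f ↔ Injective f ∧ ∀ i, G.Adj (f i) (f (i + 1)) := by
  have succ_eq (i : Fin k) : (⟨(i.val + 1) % k, Nat.mod_lt _ i.pos⟩ : Fin k) = i + 1 := by
    rw [Fin.ext_iff, Fin.val_add, Fin.val_one', Nat.add_mod_mod]
  simp only [IsCycleSeq, succ_eq]

namespace SimpleGraph

variable {V : Type*}

def bipartitePlusEdge (p : V → Prop) (u v : V) : SimpleGraph V :=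
  fromRel fun x y => p x ≠ p y ∨ (x = u ∧ y = v)

variable {p : V → Prop} {u v : V}

theorem bipartitePlusEdge_adj {x y : V} :
    (bipartitePlusEdge p u v).Adj x y ↔ x ≠ y ∧ (¬(p x ↔ p y) ∨ s(x, y) = s(u, v)) := by
  simp only [bipartitePlusEdge, fromRel_adj, ne_eq, eq_iff_iff, Sym2.eq_iff]
  tauto

theorem compl_bipartitePlusEdge_adj {x y : V} :
    (bipartitePlusEdge p u v)ᶜ.Adj x y ↔ x ≠ y ∧ (p x ↔ p y) ∧ s(x, y) ≠ s(u, v) := by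
  rw [compl_adj, bipartitePlusEdge_adj]
  tauto

theorem length_le_of_isCycleSeq_bipartitePlusEdge [Fintype V] {k : ℕ} (hk : 3 ≤ k)
    {f : Fin k → V} (hf : IsCycleSeq (bipartitePlusEdge p u v) k f) :
    k ≤ 2 * Nat.card {x // ¬p x} + 1 := by
  classical
  have : NeZero k := ⟨by omega⟩
  obtain ⟨hinj, hadj⟩ := isCycleSeq_iff.mp hf
  set S : Finset (Fin k) := {i | ¬p (f i)}
  have hS : #S ≤ Nat.card {x // ¬p x} := by
    rw [Nat.card_eq_fintype_card, Fintype.card_subtype]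
    exact Finset.card_le_card_of_injOn f (fun i hi => by simpa [S] using hi) hinj.injOn
  have hcross := Fin.card_filter_not_mem_iff_add_one_mem_le S
  have edge_eq (i : Fin k) (hi : i ∈ S ↔ i + 1 ∈ S) : s(f i, f (i + 1)) = s(u, v) :=
    (bipartitePlusEdge_adj.mp (hadj i)).2.resolve_left (by simpa [S, not_iff_not] using hi)
  have hsame : #{i | i ∈ S ↔ i + 1 ∈ S} ≤ 1 := by
    refine Finset.card_le_one.mpr fun i hi j hj => Fin.injective_sym2_mk_apply_add_one hk hinj ?_
    simp only [Finset.mem_filter, Finset.mem_univ, true_and] at hi hj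
    exact (edge_eq i hi).trans (edge_eq j hj).symm
  have hsplit := Finset.card_filter_add_card_filter_not (s := Finset.univ)
    (fun i : Fin k => i ∈ S ↔ i + 1 ∈ S)
  rw [Finset.card_univ, Fintype.card_fin] at hsplit
  omega

theorem apply_of_isCycleSeq_compl_bipartitePlusEdge [Fintype V] {k : ℕ} [NeZero k]
    (hk : Nat.card {x // ¬p x} < k) {f : Fin k → V}
    (hf : IsCycleSeq (bipartitePlusEdge p u v)ᶜ k f) (i : Fin k) : p (f i) := by
  obtain ⟨hinj, hadj⟩ := isCycleSeq_iff.mp hf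
  have hconst : ∀ j, p (f j) = p (f 0) := Fin.apply_eq_apply_zero_of_apply_add_one
    (c := fun j => p (f j)) fun j => propext (compl_bipartitePlusEdge_adj.mp (hadj j)).2.1.symm
  by_contra hi
  have hall (j : Fin k) : ¬p (f j) := by rwa [hconst j, ← hconst i]
  have := Nat.card_le_card_of_injective (fun j => (⟨f j, hall j⟩ : {x // ¬p x}))
    fun j l h => hinj (congrArg Subtype.val h)
  rw [Nat.card_eq_fintype_card (α := Fin k), Fintype.card_fin] at this
  omega

theorem card_isCycleSeq_compl_bipartitePlusEdge [Fintype V] {k : ℕ} [NeZero k] (hk₂ : 2 ≤ k)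
    (hk : Nat.card {x // ¬p x} < k) (hu : p u) (hv : p v) :
    Nat.card {f : Fin k → V // IsCycleSeq (bipartitePlusEdge p u v)ᶜ k f} =
      Nat.card {g : Fin k ↪ {x // p x} //
        ∀ i, s(g i, g (i + 1)) ≠ s(⟨u, hu⟩, ⟨v, hv⟩)} := by
  have edge_iff (g : Fin k → {x // p x}) (i : Fin k) :
      s(g i, g (i + 1)) = s(⟨u, hu⟩, ⟨v, hv⟩) ↔ s((g i : V), g (i + 1)) = s(u, v) :=
    (Sym2.map.injective Subtype.val_injective).eq_iff.symm
  exact Nat.card_congr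
    { toFun := fun f =>
        ⟨⟨fun i => ⟨f.1 i, apply_of_isCycleSeq_compl_bipartitePlusEdge hk f.2 i⟩,
          fun i j h => (isCycleSeq_iff.mp f.2).1 (congrArg Subtype.val h)⟩,
        fun i => (edge_iff _ i).not.mpr
          (compl_bipartitePlusEdge_adj.mp ((isCycleSeq_iff.mp f.2).2 i)).2.2⟩
      invFun := fun g => ⟨fun i => g.1 i, isCycleSeq_iff.mpr
        ⟨Subtype.val_injective.comp g.1.injective, fun i => compl_bipartitePlusEdge_adj.mpr
          ⟨fun h => (by simp; omega : i ≠ i + 1) (g.1.injective (Subtype.val_injective h)),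
            iff_of_true (g.1 i).2 (g.1 (i + 1)).2, (edge_iff _ i).not.mp (g.2 i)⟩⟩⟩
      left_inv := fun f => rfl
      right_inv := fun g => rfl }

end SimpleGraph

section CyclicArrangement

variable {α : Type*}

theorem card_embedding_fin_add_two_apply_zero_apply_one [Fintype α] {a b : α} (hab : a ≠ b)
    (n : ℕ) :
    Nat.card {g : Fin (n + 2) ↪ α // g 0 = a ∧ g 1 = b} =
      (Fintype.card α - 2).descFactorial n := by
  classical
  let C := {x : α // x ∉ ({a, b} : Finset α)}
  have hC : Fintype.card C = Fintype.card α - 2 := by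
    rw [Fintype.card_subtype_compl, Fintype.card_coe, Finset.card_pair hab]
  have cons_mem (r : Fin n ↪ C) :
      b ∉ Set.range (r.trans (Embedding.subtype _)) ∧
        a ∉ Set.range (Fin.cons b (r.trans (Embedding.subtype _)) : Fin (n + 1) → α) := by
    rw [Fin.range_cons]
    refine ⟨fun ⟨i, (hi : (r i : α) = b)⟩ => (r i).2 (by simp [hi]), ?_⟩
    rintro (h | ⟨i, (hi : (r i : α) = a)⟩)
    · exact hab h
    · exact (r i).2 (by simp [hi])
  have e : {g : Fin (n + 2) ↪ α // g 0 = a ∧ g 1 = b} ≃ (Fin n ↪ C) :=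
    { toFun := fun g => ⟨fun i => ⟨g.1 i.succ.succ, by
          simp only [Finset.mem_insert, Finset.mem_singleton, ← g.2.1, ← g.2.2,
            g.1.apply_eq_iff_eq, Fin.succ_ne_zero, false_or]
          exact fun h => Fin.succ_ne_zero i (Fin.succ_injective _ h)⟩,
        fun i j h => Fin.succ_injective _ <| Fin.succ_injective _ <|
          g.1.injective (congrArg Subtype.val h)⟩
      invFun := fun r => ⟨Fin.Embedding.cons (Fin.Embedding.cons (r.trans (Embedding.subtype _))
          (cons_mem r).1) (cons_mem r).2, rfl, rfl⟩
      left_inv := fun g => by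
        refine Subtype.ext (Embedding.ext fun i => ?_)
        refine Fin.cases g.2.1.symm (fun j => Fin.cases g.2.2.symm (fun l => rfl) j) i
      right_inv := fun r => rfl }
  rw [Nat.card_congr e, Nat.card_eq_fintype_card, Fintype.card_embedding_eq, hC, Fintype.card_fin]

theorem card_embedding_fin_add_two_sym2_eq [Fintype α] {a b : α} (hab : a ≠ b) (n : ℕ) :
    Nat.card {g : Fin (n + 2) ↪ α // s(g 0, g 1) = s(a, b)} =
      2 * (Fintype.card α - 2).descFactorial n := by
  classical
  have e : {g : Fin (n + 2) ↪ α // s(g 0, g 1) = s(a, b)} ≃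
      {g : Fin (n + 2) ↪ α // (g 0 = a ∧ g 1 = b) ∨ (g 0 = b ∧ g 1 = a)} :=
    Equiv.subtypeEquivRight fun g => Sym2.eq_iff
  have hdisj : Disjoint (fun g : Fin (n + 2) ↪ α => g 0 = a ∧ g 1 = b)
      (fun g => g 0 = b ∧ g 1 = a) := by
    rintro r hp hq g hg
    exact hab ((hp g hg).1.symm.trans (hq g hg).1)
  rw [Nat.card_congr e, Nat.card_eq_fintype_card, Fintype.card_subtype_or_disjoint _ _ hdisj,
    ← Nat.card_eq_fintype_card, ← Nat.card_eq_fintype_card,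
    card_embedding_fin_add_two_apply_zero_apply_one hab,
    card_embedding_fin_add_two_apply_zero_apply_one hab.symm, two_mul]

theorem card_embedding_exists_sym2_eq {k : ℕ} [NeZero k] (hk : 3 ≤ k) (e : Sym2 α) :
    Nat.card {g : Fin k ↪ α // ∃ i, s(g i, g (i + 1)) = e} =
      k * Nat.card {g : Fin k ↪ α // s(g 0, g 1) = e} := by
  let rot (i : Fin k) (g : Fin k ↪ α) : Fin k ↪ α := (Equiv.subRight i).toEmbedding.trans g
  let Φ (p : Fin k × {g : Fin k ↪ α // s(g 0, g 1) = e}) :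
      {g : Fin k ↪ α // ∃ i, s(g i, g (i + 1)) = e} :=
    ⟨rot p.1 p.2, p.1, by simpa [rot] using p.2.2⟩
  have hΦ : Bijective Φ := by
    refine ⟨fun ⟨i, h⟩ ⟨j, h'⟩ hΦ => ?_, fun ⟨g, i, hi⟩ =>
      ⟨⟨i, rot (-i) g, by simpa [rot, add_comm] using hi⟩, ?_⟩⟩
    · have hg : rot i h = rot j h' := congrArg Subtype.val hΦ
      have hij : i = j := Fin.injective_sym2_mk_apply_add_one hk (rot i h).injective <|
        calc s(rot i h i, rot i h (i + 1)) = e := by simpa [rot] using h.2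
          _ = s(rot j h' j, rot j h' (j + 1)) := by simpa [rot] using h'.2.symm
          _ = s(rot i h j, rot i h (j + 1)) := by rw [hg]
      subst hij
      refine Prod.ext rfl (Subtype.ext (Embedding.ext fun l => ?_))
      simpa [rot] using DFunLike.congr_fun hg (l + i)
    · exact Subtype.ext (Embedding.ext fun l => by simp [Φ, rot])
  rw [← Nat.card_congr (Equiv.ofBijective Φ hΦ), Nat.card_prod,
    Nat.card_eq_fintype_card (α := Fin k), Fintype.card_fin]

theorem card_embedding_forall_sym2_ne [Fintype α] {k : ℕ} [NeZero k] (hk : 3 ≤ k) {a b : α}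
    (hab : a ≠ b) :
    Nat.card {g : Fin k ↪ α // ∀ i, s(g i, g (i + 1)) ≠ s(a, b)} =
      (Fintype.card α).descFactorial k - 2 * k * (Fintype.card α - 2).descFactorial (k - 2) := by
  classical
  obtain ⟨n, rfl⟩ : ∃ n, k = n + 2 := ⟨k - 2, by omega⟩
  have e : {g : Fin (n + 2) ↪ α // ∀ i, s(g i, g (i + 1)) ≠ s(a, b)} ≃
      {g : Fin (n + 2) ↪ α // ¬∃ i, s(g i, g (i + 1)) = s(a, b)} :=
    Equiv.subtypeEquivRight fun g => not_exists.symm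
  rw [Nat.card_congr e, Nat.card_eq_fintype_card, Fintype.card_subtype_compl,
    Fintype.card_embedding_eq, Fintype.card_fin,
    ← Nat.card_eq_fintype_card
      (α := {g : Fin (n + 2) ↪ α // ∃ i, s(g i, g (i + 1)) = s(a, b)}),
    card_embedding_exists_sym2_eq hk,
    card_embedding_fin_add_two_sym2_eq hab, Nat.add_sub_cancel]
  ring_nf

end CyclicArrangement

theorem Nat.factorial_sub_two_mul_div {k : ℕ} (hk : 3 ≤ k) :
    (k.factorial - 2 * k * (k - 2).factorial) / (2 * k) = (k - 3) * (k - 2).factorial / 2 := by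
  obtain ⟨n, rfl⟩ : ∃ n, k = n + 3 := ⟨k - 3, by omega⟩
  have hfac : (n + 3).factorial =
      (n + 3) * (n * (n + 1).factorial) + 2 * (n + 3) * (n + 1).factorial := by
    simp only [Nat.factorial_succ]
    ring
  rw [show n + 3 - 2 = n + 1 by omega, show n + 3 - 3 = n by omega, hfac, Nat.add_sub_cancel,
    mul_comm 2 (n + 3), Nat.mul_div_mul_left _ _ (by omega)]

theorem modified_chi_cycle_count_general (k : ℕ) (hk : 6 ≤ k)
    (u v : Fin (k + (k / 2 - 1))) (huv : u ≠ v) (hu : u.val < k) (hv : v.val < k) :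
    (¬ ∃ f : Fin k → Fin (k + (k / 2 - 1)),
        IsCycleSeq (SimpleGraph.fromRel
          (fun x y => ((x.val < k) ≠ (y.val < k)) ∨ (x = u ∧ y = v))) k f) ∧
    cycleCount (SimpleGraph.fromRel
        (fun x y => ((x.val < k) ≠ (y.val < k)) ∨ (x = u ∧ y = v))) k
      + cycleCount (SimpleGraph.fromRel
        (fun x y : Fin (k + (k / 2 - 1)) => ((x.val < k) ≠ (y.val < k)) ∨ (x = u ∧ y = v)))ᶜ k
      = (k - 3) * (k - 2).factorial / 2 := by
  have : NeZero k := ⟨by omega⟩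
  have hR : SimpleGraph.fromRel (fun x y => ((x.val < k) ≠ (y.val < k)) ∨ (x = u ∧ y = v)) =
      SimpleGraph.bipartitePlusEdge (fun x => x.val < k) u v := rfl
  have hA : Nat.card {x : Fin (k + (k / 2 - 1)) // x.val < k} = k := by
    rw [Nat.card_eq_fintype_card, Fintype.card_fin_lt_of_le (by omega)]
  have hB : Nat.card {x : Fin (k + (k / 2 - 1)) // ¬x.val < k} = k / 2 - 1 := by
    rw [Nat.card_eq_fintype_card, Fintype.card_subtype_compl, Fintype.card_fin,
      Fintype.card_fin_lt_of_le (by omega)]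
    omega
  have no_red : ¬∃ f, IsCycleSeq (SimpleGraph.bipartitePlusEdge (fun x => x.val < k) u v) k f :=
    fun ⟨_, hf⟩ => by
      have := SimpleGraph.length_le_of_isCycleSeq_bipartitePlusEdge (by omega) hf
      omega
  have : IsEmpty {f // IsCycleSeq (SimpleGraph.bipartitePlusEdge (fun x => x.val < k) u v) k f} :=
    ⟨fun f => no_red ⟨f.1, f.2⟩⟩
  rw [hR, cycleCount, cycleCount, Nat.card_of_isEmpty, Nat.zero_div, zero_add,
    SimpleGraph.card_isCycleSeq_compl_bipartitePlusEdge
      (p := fun x : Fin (k + (k / 2 - 1)) => x.val < k) (by omega) (by omega) hu hv,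
    card_embedding_forall_sym2_ne (by omega) fun h => huv (congrArg Subtype.val h),
    ← Nat.card_eq_fintype_card, hA, Nat.descFactorial_self, Nat.descFactorial_self]
  exact ⟨no_red, Nat.factorial_sub_two_mul_div (by omega)⟩

/-- Let `k ≥ 6` be even. Color `K_{3k/2-1}` with parts `A` (first `k`
vertices) and `B` (remaining `k/2 - 1`): edges inside `B` blue, edges between `A` and
`B` red, one fixed edge `{u,v}` inside `A` red, all other edges inside `A` blue. Then
there is no red copy of `C_k`, and the total number of monochromatic copies of `C_k`
is exactly `((k-3)/2)·(k-2)!` (all blue), written as `(k-3)·(k-2)!/2`. -/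
theorem modified_chi_cycle_count (k : ℕ) (hk : 6 ≤ k) (hke : Even k)
    (u v : Fin (k + (k / 2 - 1))) (huv : u ≠ v) (hu : u.val < k) (hv : v.val < k) :
    (¬ ∃ f : Fin k → Fin (k + (k / 2 - 1)),
        IsCycleSeq (SimpleGraph.fromRel
          (fun x y => ((x.val < k) ≠ (y.val < k)) ∨ (x = u ∧ y = v))) k f) ∧
    cycleCount (SimpleGraph.fromRel
        (fun x y => ((x.val < k) ≠ (y.val < k)) ∨ (x = u ∧ y = v))) k
      + cycleCount (SimpleGraph.fromRel
        (fun x y : Fin (k + (k / 2 - 1)) => ((x.val < k) ≠ (y.val < k)) ∨ (x = u ∧ y = v)))ᶜ k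
      = (k - 3) * (k - 2).factorial / 2 :=
  modified_chi_cycle_count_general k hk u v huv hu hv
end

section
/- Suppose (U,V) is an ε-regular pair of disjoint vertex subsets of a graph G with |U|, |V| ≥ n, where n ≥ 5ε^{−2}, and d(U,V) = d with d > 5√ε. Let u, v ∈ U ∪ V be distinct vertices each adjacent to at least a (d−ε)-fraction of the vertices in the part not containing it. Let l be an integer with 3 ≤ l ≤ 2(1−2√ε)n, where l is even if u and v lie in the same part and odd if they lie in different parts. Then the number of paths of length l in G[U,V] with end vertices u and v is at least (d − 7√ε)^{l−1} · (εn) · ∏_{i=1}^{l−2} (n − ⌊i/2⌋). -/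
open Finset

/-!
Greedy embedding. Say `u ∈ V` and `l = m + 2`. Fix a set `Z` of about `ε |X|` neighbours of `v`
in the part `X` preceding it, and forbid `W = Z ∪ {u, v}` in the interior of the path. The vertex
at position `p ≤ m` is chosen among the neighbours of its predecessor, outside `W` and the vertices
already used, and typical: it has a `(d - ε)`-fraction of neighbours among the vertices available
for position `p + 1` (in `Z` when `p = m`). Regularity makes all but `ε n` candidates typical, and
only `⌊p / 2⌋` vertices of the part are used, so there are at least `|d - 7 √ε| (n - ⌊p / 2⌋)`
choices. The vertex at position `m + 1` is one of the `≥ (d - ε) |Z| ≥ |d - 7 √ε| ε n` neighbours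
of its predecessor in `Z`, and the path ends at `v`, a neighbour of every vertex of `Z`.
-/

section Density

variable {α : Type*} {G : SimpleGraph α}

theorem nbrCount_eq_card_filter [DecidableRel G.Adj] (x : α) (Y : Finset α) :
    nbrCount G x Y = #(Y.filter (G.Adj x)) := by
  rw [nbrCount, ← Nat.card_eq_finsetCard]
  exact Nat.card_congr (Equiv.subtypeEquivRight fun y => by simp)

theorem nbrCount_le_nbrCount_sdiff_add [DecidableEq α] (x : α) (X W : Finset α) :
    nbrCount G x X ≤ nbrCount G x (X \ W) + #(X ∩ W) := by
  classical
  simp only [nbrCount_eq_card_filter]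
  calc #(X.filter (G.Adj x)) ≤ #((X \ W).filter (G.Adj x) ∪ X ∩ W) := by
        refine card_le_card fun y hy => ?_
        simp only [mem_filter, mem_union, mem_sdiff, mem_inter] at hy ⊢
        tauto
    _ ≤ _ := card_union_le _ _

theorem eCnt_eq_sum_nbrCount (X Y : Finset α) : eCnt G X Y = ∑ x ∈ X, nbrCount G x Y := by
  classical
  have : eCnt G X Y = #((X ×ˢ Y).filter fun p => G.Adj p.1 p.2) := by
    rw [eCnt, ← Nat.card_eq_finsetCard]
    exact Nat.card_congr (Equiv.subtypeEquivRight fun p => by simp [and_assoc])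
  rw [this, card_filter, sum_product]
  simp only [nbrCount_eq_card_filter, card_filter]

theorem eCnt_comm (X Y : Finset α) : eCnt G X Y = eCnt G Y X :=
  Nat.card_congr ((Equiv.prodComm α α).subtypeEquiv fun p => by
    simp only [Equiv.prodComm_apply, Prod.fst_swap, Prod.snd_swap, G.adj_comm p.1]; tauto)

theorem dens_comm (X Y : Finset α) : dens G X Y = dens G Y X := by
  simp only [_root_.dens, eCnt_comm X, mul_comm]

theorem IsRegularPair.symm {X Y : Finset α} {ε : ℝ} (h : IsRegularPair G X Y ε) :
    IsRegularPair G Y X ε := fun U hU W hW hUc hWc => by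
  rw [dens_comm U W, dens_comm Y X]
  exact h W hW U hU hWc hUc

theorem dens_le_one {X Y : Finset α} (hX : X.Nonempty) (hY : Y.Nonempty) : dens G X Y ≤ 1 := by
  classical
  rw [_root_.dens, div_le_one (by positivity), eCnt_eq_sum_nbrCount]
  have : ∀ x ∈ X, nbrCount G x Y ≤ #Y := fun x _ => by
    rw [nbrCount_eq_card_filter]; exact card_filter_le _ _
  exact_mod_cast (sum_le_sum this).trans_eq (by simp)

theorem IsRegularPair.card_filter_nbrCount_lt_le {X Y S : Finset α} {ε : ℝ}
    (hε : 0 ≤ ε) (hreg : IsRegularPair G X Y ε) (hS : S ⊆ Y) (hSY : ε * #Y ≤ #S) :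
    (#(X.filter fun x => nbrCount G x S < (dens G X Y - ε) * #S) : ℝ) ≤ ε * #X := by
  set T := X.filter fun x => nbrCount G x S < (dens G X Y - ε) * #S
  by_contra! hT
  have hTne : T.Nonempty := card_pos.1 (by exact_mod_cast (by positivity : 0 ≤ ε * #X).trans_lt hT)
  have hsum : (eCnt G T S : ℝ) < #T * ((dens G X Y - ε) * #S) := by
    rw [eCnt_eq_sum_nbrCount]; push_cast
    simpa using sum_lt_sum_of_nonempty hTne fun x hx => (mem_filter.1 hx).2
  have hSne : S.Nonempty := by
    obtain ⟨x, hx⟩ := hTne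
    rw [nonempty_iff_ne_empty]
    rintro rfl
    have := (mem_filter.1 hx).2
    simp only [card_empty, Nat.cast_zero, mul_zero] at this
    exact (Nat.cast_nonneg _).not_gt this
  have hdens : dens G T S < dens G X Y - ε := by
    rw [_root_.dens, div_lt_iff₀ (by positivity)]; linarith
  linarith [(abs_le.1 (hreg T (filter_subset _ _) S hS hT.le hSY)).1]

theorem IsRegularPair.nbrCount_sub_le_card_typical [DecidableEq α] [DecidableRel G.Adj]
    {X Y R T : Finset α} {ε : ℝ} (hε : 0 ≤ ε) (hreg : IsRegularPair G X Y ε) (hR : R ⊆ X)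
    (hT : T ⊆ Y) (hTY : ε * #Y ≤ #T) (y : α) :
    nbrCount G y R - ε * #X ≤
      #(R.filter fun x => G.Adj y x ∧ (dens G X Y - ε) * #T ≤ nbrCount G x T) := by
  have hbad := hreg.card_filter_nbrCount_lt_le hε hT hTY
  have hsub : R.filter (G.Adj y) ⊆ (R.filter fun x => G.Adj y x ∧
      (dens G X Y - ε) * #T ≤ nbrCount G x T) ∪
        X.filter fun x => nbrCount G x T < (dens G X Y - ε) * #T := by
    intro x hx
    rw [mem_filter] at hx
    by_cases hx' : (dens G X Y - ε) * #T ≤ nbrCount G x T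
    · exact mem_union_left _ (mem_filter.2 ⟨hx.1, hx.2, hx'⟩)
    · exact mem_union_right _ (mem_filter.2 ⟨hR hx.1, not_le.1 hx'⟩)
  have hcard := (Nat.cast_le (α := ℝ)).2 ((card_le_card hsub).trans (card_union_le _ _))
  push_cast at hcard
  rw [nbrCount_eq_card_filter]
  linarith

end Density

section Sequences

variable {α : Type*}

theorem exists_finset_snoc_card_ge {k : ℕ} (S : Finset (Fin k → α)) {Q : (Fin (k + 1) → α) → Prop}
    {b : ℝ} (h : ∀ f ∈ S, ∃ C : Finset α, b ≤ #C ∧ ∀ x ∈ C, Q (Fin.snoc f x)) :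
    ∃ S' : Finset (Fin (k + 1) → α), #S * b ≤ #S' ∧ ∀ g ∈ S', Q g := by
  classical
  choose! C hCb hCQ using h
  refine ⟨(S.sigma C).image fun p => Fin.snoc p.1 p.2, ?_, ?_⟩
  · have hinj : Set.InjOn (fun p : (_ : Fin k → α) × α => (Fin.snoc p.1 p.2 : Fin (k + 1) → α))
        (S.sigma C) := fun p _ q _ hpq => by
      obtain ⟨h1, h2⟩ := Fin.snoc_injective2 hpq
      exact Sigma.ext h1 (heq_of_eq h2)
    rw [card_image_of_injOn hinj, card_sigma, Nat.cast_sum, ← nsmul_eq_mul, ← sum_const]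
    exact sum_le_sum hCb
  · simp only [mem_image, mem_sigma]
    rintro _ ⟨⟨f, x⟩, ⟨hf, hx⟩, rfl⟩
    exact hCQ f hf x hx

theorem exists_finset_card_ge_prod (P : ∀ j : ℕ, (Fin (j + 1) → α) → Prop) {a : α}
    (h0 : P 0 fun _ => a) {b : ℕ → ℝ} {k : ℕ} (hb : ∀ j < k, 0 ≤ b j)
    (hstep : ∀ j < k, ∀ f, P j f → ∃ C : Finset α, b j ≤ #C ∧ ∀ x ∈ C, P (j + 1) (Fin.snoc f x)) :
    ∃ S : Finset (Fin (k + 1) → α), ∏ j ∈ range k, b j ≤ #S ∧ ∀ f ∈ S, P k f := by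
  induction k with
  | zero => exact ⟨{fun _ => a}, by simp, by simpa using h0⟩
  | succ k ih =>
    obtain ⟨S, hS, hSP⟩ := ih (fun j hj => hb j (by omega)) fun j hj => hstep j (by omega)
    obtain ⟨S', hS', hS'P⟩ :=
      exists_finset_snoc_card_ge S fun f hf => hstep k (by omega) f (hSP f hf)
    refine ⟨S', ?_, hS'P⟩
    rw [prod_range_succ]
    exact (mul_le_mul_of_nonneg_right hS (hb k (by omega))).trans hS'

theorem card_le_natCard_of_forall_mem {p : α → Prop} (hp : {x | p x}.Finite) {S : Finset α}
    (hS : ∀ x ∈ S, p x) : #S ≤ Nat.card {x // p x} := by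
  rw [← Nat.card_eq_finsetCard]
  exact Nat.card_mono hp fun x hx => hS x hx

end Sequences

section BipartiteParts

variable {α : Type*} {G : SimpleGraph α} {U V : Finset α}

def bipPart (U V : Finset α) (i : ℕ) : Finset α := if i % 2 = 0 then V else U

theorem bipPart_eq_of_mod_two_eq {i j : ℕ} (h : i % 2 = j % 2) : bipPart U V i = bipPart U V j := by
  simp only [bipPart, h]

theorem bipPart_succ (i : ℕ) : bipPart U V (i + 1) = bipPart V U i := by
  unfold bipPart; split_ifs <;> first | rfl | omega

theorem disjoint_bipPart (hUV : Disjoint U V) {i j : ℕ} (h : i % 2 ≠ j % 2) :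
    Disjoint (bipPart U V i) (bipPart U V j) := by
  unfold bipPart; split_ifs <;> first | omega | exact hUV | exact hUV.symm

theorem le_card_bipPart {n : ℕ} (hU : n ≤ #U) (hV : n ≤ #V) (i : ℕ) : n ≤ #(bipPart U V i) := by
  unfold bipPart; split_ifs <;> assumption

theorem IsRegularPair.bipPart {ε : ℝ} (hreg : IsRegularPair G U V ε) (i : ℕ) :
    IsRegularPair G (bipPart U V i) (bipPart U V (i + 1)) ε ∧
      dens G (bipPart U V i) (bipPart U V (i + 1)) = dens G U V := by
  rw [bipPart_succ]
  unfold _root_.bipPart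
  split_ifs
  · exact ⟨hreg.symm, dens_comm V U⟩
  · exact ⟨hreg, rfl⟩

theorem IsBipPathFromV.mem_bipPart {k : ℕ} {f : Fin k → α} (hf : IsBipPathFromV G U V k f)
    (i : Fin k) : f i ∈ bipPart U V i := by
  unfold bipPart; split_ifs with h
  · exact (hf.2.1 i).1 h
  · exact (hf.2.1 i).2 (by omega)

theorem IsBipPathFromV.snoc {j : ℕ} {f : Fin (j + 1) → α} {x : α}
    (hf : IsBipPathFromV G U V (j + 1) f) (hx : x ∈ bipPart U V (j + 1)) (hxf : x ∉ Set.range f)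
    (hadj : G.Adj (f (Fin.last j)) x) : IsBipPathFromV G U V (j + 2) (Fin.snoc f x) := by
  refine ⟨Fin.snoc_injective_of_injective hf.1 hxf, fun i => ?_, fun i hi => ?_⟩
  · have hmem : (Fin.snoc f x : Fin (j + 2) → α) i ∈ bipPart U V i := by
      induction i using Fin.lastCases with
      | last => simpa using hx
      | cast i => simpa using hf.mem_bipPart i
    unfold bipPart at hmem
    constructor <;> intro h <;> simpa [h] using hmem
  · rcases Nat.lt_or_ge (i.val + 1) (j + 1) with h | h
    · simp only [Fin.snoc, h, show i.val < j + 1 by omega, dite_true, cast_eq]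
      exact hf.2.2 ⟨i, by omega⟩ h
    · have hi : i.val = j := by omega
      simp only [Fin.snoc, hi, lt_add_iff_pos_right, zero_lt_one, dite_true, lt_irrefl, dite_false,
        cast_eq]
      convert hadj
      ext; simp [hi]

theorem IsBipPathFromV.isAltPath {l : ℕ} {f : Fin (l + 1) → α}
    (hf : IsBipPathFromV G U V (l + 1) f) : IsAltPath G U V l f := by
  refine ⟨hf.1, fun i => ?_, fun i hi => ⟨hf.2.2 i hi, ?_⟩⟩
  · rcases Nat.mod_two_eq_zero_or_one i with h | h
    · exact Or.inr ((hf.2.1 i).1 h)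
    · exact Or.inl ((hf.2.1 i).2 h)
  · rcases Nat.mod_two_eq_zero_or_one i with h | h
    · exact Or.inr ⟨(hf.2.1 i).1 h, (hf.2.1 _).2 (by simp only; omega)⟩
    · exact Or.inl ⟨(hf.2.1 i).2 h, (hf.2.1 _).1 (by simp only; omega)⟩

theorem isAltPath_comm {A B : Finset α} {l : ℕ} {f : Fin (l + 1) → α} :
    IsAltPath G A B l f ↔ IsAltPath G B A l f := by
  unfold IsAltPath
  simp only [or_comm]

/-- Stated for position `k + c` so as to cover both the part of the next vertex (`c = 0`, bound
`⌊k / 2⌋`) and the part after it (`c = 1`). -/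
theorem IsBipPathFromV.card_image_inter_bipPart_le [DecidableEq α] (hUV : Disjoint U V) {k : ℕ}
    {f : Fin k → α} (hf : IsBipPathFromV G U V k f) (c : ℕ) :
    #(univ.image f ∩ bipPart U V (k + c)) ≤ (k + c) / 2 := by
  have hsub : univ.image f ∩ bipPart U V (k + c) ⊆
      (univ.filter fun i : Fin k => i.val % 2 = (k + c) % 2).image f := by
    intro y hy
    obtain ⟨hy, hyc⟩ := mem_inter.1 hy
    obtain ⟨i, -, rfl⟩ := mem_image.1 hy
    refine mem_image_of_mem f (mem_filter.2 ⟨mem_univ _, ?_⟩)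
    by_contra h
    exact disjoint_left.1 (disjoint_bipPart hUV h) (hf.mem_bipPart i) hyc
  refine (card_le_card hsub).trans (card_image_le.trans ?_)
  simpa using card_le_card_of_injOn (t := range ((k + c) / 2)) (fun i : Fin k => i.val / 2)
    (fun i hi => by
      simp only [coe_filter, Set.mem_ofPred_eq, mem_univ, true_and] at hi
      simp only [coe_range, Set.mem_Iio]
      omega)
    (fun i hi i' hi' h => by
      simp only [coe_filter, Set.mem_ofPred_eq, mem_univ, true_and] at hi hi'
      simp only at h
      ext; omega)

end BipartiteParts

section Estimates

variable {r d n s k : ℝ}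

theorem sq_mul_le_sub_sub_sub (hr : 0 < r) (hr5 : r < 1 / 5) (hrn : 125 ≤ r ^ 2 * n)
    (hs : n ≤ s) (hk : k ≤ (1 - 2 * r) * n) : r ^ 2 * s ≤ s - (r ^ 2 * s + 3) - k := by
  have hn : 0 < n := by nlinarith
  nlinarith [mul_le_mul_of_nonneg_left hs (by nlinarith : (0:ℝ) ≤ 1 - 3 * r ^ 2)]

theorem abs_sub_mul_le (hr : 0 < r) (hrd : 5 * r < d) (hd : d ≤ 1) (hrn : 125 ≤ r ^ 2 * n)
    (hs : n ≤ s) (hk : k ≤ (1 - 2 * r) * n) :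
    |d - 7 * r| * (n - k) ≤
      (d - r ^ 2) * (s - (r ^ 2 * s + 3) - k) - (r ^ 2 * s + 3) - r ^ 2 * s := by
  have hr5 : r < 1 / 5 := by linarith
  have hn : 0 < n := by nlinarith
  have hnk : 2 * r * n ≤ n - k := by linarith
  have hdr : |d - 7 * r| ≤ d - r ^ 2 - 2 * r := by
    rw [abs_le]; constructor <;> nlinarith
  have hcoef : 0 ≤ (d - r ^ 2) * (1 - r ^ 2) - 2 * r ^ 2 := by nlinarith
  calc |d - 7 * r| * (n - k) ≤ (d - r ^ 2 - 2 * r) * (n - k) :=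
        mul_le_mul_of_nonneg_right hdr (by nlinarith)
    _ ≤ (d - r ^ 2) * (n - k) - 3 * r ^ 2 * n - 6 := by
        nlinarith [mul_le_mul_of_nonneg_left hnk (by positivity : (0:ℝ) ≤ 2 * r)]
    _ ≤ _ := by
        nlinarith [mul_nonneg (sub_nonneg.2 hs) hcoef,
          mul_nonneg (by nlinarith : 0 ≤ 1 - (d - r ^ 2)) (by positivity : 0 ≤ r ^ 2 * n + 3)]

theorem abs_sub_mul_le_sub_mul (hr : 0 < r) (hrd : 5 * r < d) (hd : d ≤ 1) {z : ℝ}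
    (hz : r ^ 2 * n ≤ z) (hn : 0 ≤ n) : |d - 7 * r| * (r ^ 2 * n) ≤ (d - r ^ 2) * z := by
  have hdr : |d - 7 * r| ≤ d - r ^ 2 := by
    rw [abs_le]; constructor <;> nlinarith
  exact mul_le_mul hdr hz (by positivity) (by nlinarith)

theorem le_sq_mul_of_inv_sq_le (hr : 0 < r) (hr5 : r < 1 / 5) (hn : 5 * ((r ^ 2)⁻¹) ^ 2 ≤ n) :
    125 ≤ r ^ 2 * n := by
  have h4 : 5 ≤ r ^ 2 * (r ^ 2 * n) := by
    have := mul_le_mul_of_nonneg_left hn (by positivity : (0:ℝ) ≤ r ^ 4)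
    rw [show r ^ 4 * (5 * ((r ^ 2)⁻¹) ^ 2) = 5 by field_simp] at this
    linarith
  nlinarith [mul_pos hr hr]

end Estimates

section GreedyPaths

variable {α : Type*} [DecidableEq α] {G : SimpleGraph α} {U V W Z : Finset α} {m : ℕ} {u : α}

theorem image_univ_snoc {k : ℕ} (f : Fin k → α) (x : α) :
    univ.image (Fin.snoc f x : Fin (k + 1) → α) = insert x (univ.image f) := by
  apply coe_injective
  push_cast
  simp [Set.image_univ, Fin.range_snoc]

/-- The vertices available for position `j + 1` once those of `S` are used: fresh vertices of the
right part outside `W` up to position `m`, then the set `Z` of neighbours of the end vertex. -/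
def reservoir (U V W Z : Finset α) (m j : ℕ) (S : Finset α) : Finset α :=
  if j < m then (bipPart U V (j + 1) \ W) \ S else Z

theorem reservoir_self (S : Finset α) : reservoir U V W Z m m S = Z := if_neg (lt_irrefl m)

theorem reservoir_subset_bipPart (hZ : Z ⊆ bipPart U V (m + 1)) {j : ℕ} (hj : j ≤ m)
    (S : Finset α) : reservoir U V W Z m j S ⊆ bipPart U V (j + 1) := by
  unfold reservoir
  split_ifs with h
  · exact sdiff_subset.trans sdiff_subset
  · obtain rfl : j = m := by omega
    exact hZ

theorem reservoir_insert (hUV : Disjoint U V) {j : ℕ} {x : α} (hx : x ∈ bipPart U V j)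
    (S : Finset α) : reservoir U V W Z m j (insert x S) = reservoir U V W Z m j S := by
  unfold reservoir
  split_ifs
  · rw [sdiff_insert, erase_eq_of_notMem]
    exact fun h => disjoint_left.1 (disjoint_bipPart hUV (by omega)) hx
      (mem_sdiff.1 (mem_sdiff.1 h).1).1
  · rfl

theorem card_reservoir_ge (hUV : Disjoint U V) {ε : ℝ}
    (hW : ∀ q, (#(bipPart U V q ∩ W) : ℝ) ≤ ε * #(bipPart U V q) + 3) {q k : ℕ} (hq : q < m)
    {f : Fin k → α} (hf : IsBipPathFromV G U V k f) (hkq : k ≤ q + 1) :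
    #(bipPart U V (q + 1)) - (ε * #(bipPart U V (q + 1)) + 3) - ((q + 1) / 2 : ℕ) ≤
      (#(reservoir U V W Z m q (univ.image f)) : ℝ) := by
  set X := bipPart U V (q + 1)
  have hres : reservoir U V W Z m q (univ.image f) = (X \ W) \ univ.image f := if_pos hq
  have hused : #((X \ W) ∩ univ.image f) ≤ (q + 1) / 2 := by
    have h := hf.card_image_inter_bipPart_le hUV (q + 1 - k)
    rw [Nat.add_sub_cancel' hkq] at h
    refine (card_le_card fun y hy => ?_).trans h
    rw [mem_inter, mem_sdiff] at hy
    exact mem_inter.2 ⟨hy.2, hy.1.1⟩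
  have hX : (#(X \ W) : ℝ) + #(X ∩ W) = #X := by exact_mod_cast card_sdiff_add_card_inter X W
  have hXW : (#((X \ W) \ univ.image f) : ℝ) + #((X \ W) ∩ univ.image f) = #(X \ W) := by
    exact_mod_cast card_sdiff_add_card_inter (X \ W) (univ.image f)
  have hused' : (#((X \ W) ∩ univ.image f) : ℝ) ≤ ((q + 1) / 2 : ℕ) := by exact_mod_cast hused
  rw [hres]
  linarith [hW (q + 1)]

theorem sq_mul_card_le_card_reservoir (hUV : Disjoint U V) {r : ℝ} (hr : 0 < r)
    (hr5 : r < 1 / 5) {n : ℕ} (hrn : 125 ≤ r ^ 2 * n) (hU : n ≤ #U) (hV : n ≤ #V)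
    (hmn : (m + 1 : ℝ) ≤ 2 * (1 - 2 * r) * n)
    (hW : ∀ q, (#(bipPart U V q ∩ W) : ℝ) ≤ r ^ 2 * #(bipPart U V q) + 3)
    (hZcard : r ^ 2 * #(bipPart U V (m + 1)) ≤ #Z) {q k : ℕ} (hq : q ≤ m)
    {f : Fin k → α} (hf : IsBipPathFromV G U V k f) (hkq : k ≤ q + 1) :
    r ^ 2 * #(bipPart U V (q + 1)) ≤ (#(reservoir U V W Z m q (univ.image f)) : ℝ) := by
  rcases hq.lt_or_eq with hq | rfl
  · have hk : (((q + 1) / 2 : ℕ) : ℝ) ≤ (1 - 2 * r) * n := by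
      have : 2 * (((q + 1) / 2 : ℕ) : ℝ) ≤ m + 1 := by
        exact_mod_cast (by omega : 2 * ((q + 1) / 2) ≤ m + 1)
      linarith
    have hs : (n : ℝ) ≤ #(bipPart U V (q + 1)) := by exact_mod_cast le_card_bipPart hU hV _
    exact (sq_mul_le_sub_sub_sub hr hr5 hrn hs hk).trans (card_reservoir_ge hUV hW hq hf hkq)
  · rwa [reservoir_self]

/-- The invariant of the greedy construction. The start `u` itself need not be typical: its
degree into `U` is used instead. -/
structure IsGoodPrefix (G : SimpleGraph α) (U V W Z : Finset α) (m : ℕ) (u : α) (δ : ℝ) (j : ℕ)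
    (f : Fin (j + 1) → α) : Prop where
  isBipPath : IsBipPathFromV G U V (j + 1) f
  head : f 0 = u
  notMem : ∀ i, i ≠ 0 → f i ∉ W
  typical : j ≠ 0 → δ * #(reservoir U V W Z m j (univ.image f)) ≤
    nbrCount G (f (Fin.last j)) (reservoir U V W Z m j (univ.image f))

variable {δ : ℝ}

theorem isGoodPrefix_zero (hu : u ∈ V) : IsGoodPrefix G U V W Z m u δ 0 fun _ => u where
  isBipPath := ⟨fun _ _ _ => Subsingleton.elim (α := Fin 1) _ _, fun i => ⟨fun _ => hu, by omega⟩,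
    fun i h => by omega⟩
  head := rfl
  notMem i hi := absurd (Subsingleton.elim (α := Fin 1) i 0) hi
  typical h := absurd rfl h

theorem IsGoodPrefix.notMem_range {j : ℕ} {f : Fin (j + 1) → α}
    (hf : IsGoodPrefix G U V W Z m u δ j f) {x : α} (hxu : x ≠ u) (hxW : x ∈ W) :
    x ∉ Set.range f := by
  rintro ⟨i, rfl⟩
  by_cases hi : i = 0
  · exact hxu (hi ▸ hf.head)
  · exact hf.notMem i hi hxW

theorem IsGoodPrefix.snoc (hUV : Disjoint U V) {j : ℕ} {f : Fin (j + 1) → α}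
    (hf : IsGoodPrefix G U V W Z m u δ j f) (hj : j < m) {x : α}
    (hx : x ∈ reservoir U V W Z m j (univ.image f)) (hadj : G.Adj (f (Fin.last j)) x)
    (htyp : δ * #(reservoir U V W Z m (j + 1) (univ.image f)) ≤
      nbrCount G x (reservoir U V W Z m (j + 1) (univ.image f))) :
    IsGoodPrefix G U V W Z m u δ (j + 1) (Fin.snoc f x) := by
  simp only [reservoir, hj, if_true, mem_sdiff, mem_image, mem_univ, true_and] at hx
  obtain ⟨⟨hxpart, hxW⟩, hxf⟩ := hx
  refine ⟨hf.isBipPath.snoc hxpart hxf hadj, ?_, fun i hi => ?_, fun _ => ?_⟩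
  · simpa [Fin.snoc] using hf.head
  · induction i using Fin.lastCases with
    | last => simpa using hxW
    | cast i => simpa using hf.notMem i (by rintro rfl; exact hi rfl)
  · rwa [image_univ_snoc, reservoir_insert hUV hxpart, Fin.snoc_last]

theorem IsGoodPrefix.nbrCount_reservoir_ge {ε : ℝ} (hε : 0 ≤ ε) (hδ : 0 ≤ δ)
    (hW : ∀ q, (#(bipPart U V q ∩ W) : ℝ) ≤ ε * #(bipPart U V q) + 3) (huW : u ∈ W)
    (hdegu : δ * #U ≤ nbrCount G u U) {j : ℕ} {f : Fin (j + 1) → α}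
    (hf : IsGoodPrefix G U V W Z m u δ j f) (hj : j < m) :
    δ * #(reservoir U V W Z m j (univ.image f)) - (ε * #(bipPart U V (j + 1)) + 3) ≤
      nbrCount G (f (Fin.last j)) (reservoir U V W Z m j (univ.image f)) := by
  rcases Nat.eq_zero_or_pos j with rfl | hj0
  · obtain rfl : f = fun _ => u := funext fun i => Subsingleton.elim (α := Fin 1) i 0 ▸ hf.head
    have hres : reservoir U V W Z m 0 (univ.image fun _ : Fin (0 + 1) => u) = U \ W := by
      rw [reservoir, if_pos hj, image_const univ_nonempty, sdiff_singleton_eq_erase,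
        erase_eq_of_notMem fun h => (mem_sdiff.1 h).2 huW]
      rfl
    rw [hres]
    change δ * #(U \ W) - (ε * #U + 3) ≤ nbrCount G u (U \ W)
    have h1 : (nbrCount G u U : ℝ) ≤ nbrCount G u (U \ W) + #(U ∩ W) := by
      exact_mod_cast nbrCount_le_nbrCount_sdiff_add u U W
    have h2 : δ * #(U \ W) ≤ δ * #U := by
      gcongr
      exact sdiff_subset
    have h3 : (#(U ∩ W) : ℝ) ≤ ε * #U + 3 := hW 1
    linarith
  · have := hf.typical hj0.ne'
    have : 0 ≤ ε * #(bipPart U V (j + 1)) + 3 := by positivity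
    linarith

theorem IsGoodPrefix.le_card_extensions [DecidableRel G.Adj] (hUV : Disjoint U V) {r : ℝ}
    (hr : 0 < r) {n : ℕ} (hrd : 5 * r < dens G U V) (hd1 : dens G U V ≤ 1) (hrn : 125 ≤ r ^ 2 * n)
    (hU : n ≤ #U) (hV : n ≤ #V) (hreg : IsRegularPair G U V (r ^ 2))
    (hmn : (m + 1 : ℝ) ≤ 2 * (1 - 2 * r) * n) (hZ : Z ⊆ bipPart U V (m + 1))
    (hZcard : r ^ 2 * #(bipPart U V (m + 1)) ≤ #Z)
    (hW : ∀ q, (#(bipPart U V q ∩ W) : ℝ) ≤ r ^ 2 * #(bipPart U V q) + 3) (huW : u ∈ W)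
    (hdegu : (dens G U V - r ^ 2) * #U ≤ nbrCount G u U) {j : ℕ} {f : Fin (j + 1) → α}
    (hf : IsGoodPrefix G U V W Z m u (dens G U V - r ^ 2) j f) (hj : j < m) :
    |dens G U V - 7 * r| * (n - ((j + 1) / 2 : ℕ)) ≤
      #((reservoir U V W Z m j (univ.image f)).filter fun x => G.Adj (f (Fin.last j)) x ∧
        (dens G U V - r ^ 2) * #(reservoir U V W Z m (j + 1) (univ.image f)) ≤
          nbrCount G x (reservoir U V W Z m (j + 1) (univ.image f))) := by
  have hs : (n : ℝ) ≤ #(bipPart U V (j + 1)) := by exact_mod_cast le_card_bipPart hU hV _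
  set d := dens G U V
  set R := reservoir U V W Z m j (univ.image f)
  set T := reservoir U V W Z m (j + 1) (univ.image f)
  set s : ℝ := ((#(bipPart U V (j + 1)) : ℕ) : ℝ)
  have hr5 : r < 1 / 5 := by linarith
  have hk : (((j + 1) / 2 : ℕ) : ℝ) ≤ (1 - 2 * r) * n := by
    have : 2 * (((j + 1) / 2 : ℕ) : ℝ) ≤ m + 1 := by
      exact_mod_cast (by omega : 2 * ((j + 1) / 2) ≤ m + 1)
    linarith
  have hT : r ^ 2 * #(bipPart U V (j + 1 + 1)) ≤ (#T : ℝ) :=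
    sq_mul_card_le_card_reservoir hUV hr hr5 hrn hU hV hmn hW hZcard hj hf.isBipPath (Nat.le_succ _)
  have hcand := (hreg.bipPart (j + 1)).1.nbrCount_sub_le_card_typical (by positivity)
    (reservoir_subset_bipPart (W := W) hZ hj.le (univ.image f))
    (reservoir_subset_bipPart hZ hj _) hT (f (Fin.last j))
  rw [(hreg.bipPart (j + 1)).2] at hcand
  have hdeg := hf.nbrCount_reservoir_ge (by positivity) (by nlinarith) hW huW hdegu hj
  have hR : s - (r ^ 2 * s + 3) - ((j + 1) / 2 : ℕ) ≤ (#R : ℝ) :=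
    card_reservoir_ge hUV hW hj hf.isBipPath le_rfl
  have hRd : (d - r ^ 2) * (s - (r ^ 2 * s + 3) - ((j + 1) / 2 : ℕ)) ≤ (d - r ^ 2) * #R :=
    mul_le_mul_of_nonneg_left hR (by nlinarith)
  linarith [abs_sub_mul_le hr hrd hd1 hrn hs hk]

theorem card_bipPart_inter_insert_le (hUV : Disjoint U V) {ε : ℝ} (hε : 0 ≤ ε) {p : ℕ}
    (hZ : Z ⊆ bipPart U V p) (hZcard : #Z ≤ ε * #(bipPart U V p) + 1) (u v : α) (q : ℕ) :
    (#(bipPart U V q ∩ insert u (insert v Z)) : ℝ) ≤ ε * #(bipPart U V q) + 3 := by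
  have h1 : #(bipPart U V q ∩ insert u (insert v Z)) ≤ #(bipPart U V q ∩ Z) + 2 :=
    calc _ ≤ #(insert u (insert v (bipPart U V q ∩ Z))) := card_le_card fun y => by
            simp only [mem_inter, mem_insert]; tauto
      _ ≤ _ := (card_insert_le _ _).trans (by simpa using card_insert_le _ _)
  have h2 : (#(bipPart U V q ∩ Z) : ℝ) ≤ ε * #(bipPart U V q) + 1 := by
    by_cases h : q % 2 = p % 2
    · rw [bipPart_eq_of_mod_two_eq h]
      exact (Nat.cast_le.2 (card_le_card inter_subset_right)).trans hZcard
    · rw [disjoint_iff_inter_eq_empty.1 ((disjoint_bipPart hUV h).mono_right hZ)]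
      simp only [card_empty, Nat.cast_zero]
      positivity
  have : (#(bipPart U V q ∩ insert u (insert v Z)) : ℝ) ≤ #(bipPart U V q ∩ Z) + 2 := by
    exact_mod_cast h1
  linarith

theorem exists_subset_adj_card {ε : ℝ} (hε : 0 ≤ ε) {X : Finset α} {v : α}
    (h : ε * #X + 2 ≤ nbrCount G v X) (u : α) :
    ∃ Z ⊆ X, (∀ z ∈ Z, G.Adj v z) ∧ u ∉ Z ∧ ε * #X ≤ #Z ∧ #Z ≤ ε * #X + 1 := by
  classical
  have hc : ⌈ε * #X⌉₊ ≤ #((X.filter (G.Adj v)).erase u) := by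
    have h1 := pred_card_le_card_erase (s := X.filter (G.Adj v)) (a := u)
    have h2 : (⌈ε * #X⌉₊ : ℝ) < ε * #X + 1 := Nat.ceil_lt_add_one (by positivity)
    rw [nbrCount_eq_card_filter] at h
    have : (⌈ε * #X⌉₊ : ℝ) + 1 < #(X.filter (G.Adj v)) := by linarith
    have : ⌈ε * #X⌉₊ + 1 < #(X.filter (G.Adj v)) := by exact_mod_cast this
    omega
  obtain ⟨Z, hZ, hZc⟩ := exists_subset_card_eq hc
  have hZ' : ∀ z ∈ Z, z ∈ X ∧ G.Adj v z := fun z hz => mem_filter.1 (mem_of_mem_erase (hZ hz))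
  refine ⟨Z, fun z hz => (hZ' z hz).1, fun z hz => (hZ' z hz).2,
    fun hu => notMem_erase u _ (hZ hu), ?_, ?_⟩ <;> rw [hZc]
  · exact Nat.le_ceil _
  · exact (Nat.ceil_lt_add_one (by positivity)).le

theorem exists_finset_isGoodPrefix (hUV : Disjoint U V) {r : ℝ} (hr : 0 < r)
    {n : ℕ} (hrd : 5 * r < dens G U V) (hd1 : dens G U V ≤ 1) (hrn : 125 ≤ r ^ 2 * n)
    (hU : n ≤ #U) (hV : n ≤ #V) (hreg : IsRegularPair G U V (r ^ 2))
    (hmn : (m + 1 : ℝ) ≤ 2 * (1 - 2 * r) * n) (hZ : Z ⊆ bipPart U V (m + 1))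
    (hZcard : r ^ 2 * #(bipPart U V (m + 1)) ≤ #Z)
    (hW : ∀ q, (#(bipPart U V q ∩ W) : ℝ) ≤ r ^ 2 * #(bipPart U V q) + 3) (hu : u ∈ V)
    (huW : u ∈ W) (hdegu : (dens G U V - r ^ 2) * #U ≤ nbrCount G u U) :
    ∃ S : Finset (Fin (m + 1) → α),
      ∏ j ∈ range m, |dens G U V - 7 * r| * (n - ((j + 1) / 2 : ℕ)) ≤ (#S : ℝ) ∧
        ∀ f ∈ S, IsGoodPrefix G U V W Z m u (dens G U V - r ^ 2) m f := by
  classical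
  refine exists_finset_card_ge_prod _ (isGoodPrefix_zero hu) (fun j hj => ?_) fun j hj f hf =>
    ⟨_, hf.le_card_extensions hUV hr hrd hd1 hrn hU hV hreg hmn hZ hZcard hW huW hdegu hj,
      fun x hx => ?_⟩
  · have : 2 * (((j + 1) / 2 : ℕ) : ℝ) ≤ m := by exact_mod_cast (by omega : 2 * ((j + 1) / 2) ≤ m)
    exact mul_nonneg (abs_nonneg _) (by nlinarith)
  · obtain ⟨hxR, hadj, htyp⟩ := mem_filter.1 hx
    exact hf.snoc hUV hj hxR hadj htyp

/-- The last two steps: a neighbour of the end vertex in `Z`, then `v`. -/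
theorem exists_finset_close (hUV : Disjoint U V) (hm : m ≠ 0)
    (hZ : Z ⊆ bipPart U V (m + 1)) (hZW : Z ⊆ W) (huZ : u ∉ Z) {v : α} (hvZ : ∀ z ∈ Z, G.Adj v z)
    (huv : u ≠ v) (hvW : v ∈ W) (hv : v ∈ bipPart U V (m + 2)) (S : Finset (Fin (m + 1) → α))
    (hS : ∀ f ∈ S, IsGoodPrefix G U V W Z m u δ m f) :
    ∃ S' : Finset (Fin (m + 3) → α), #S * (δ * #Z) ≤ (#S' : ℝ) ∧
      ∀ f ∈ S', IsBipPathFromV G U V (m + 3) f ∧ f 0 = u ∧ f (Fin.last (m + 2)) = v := by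
  classical
  obtain ⟨S₂, hS₂, hS₂path⟩ := exists_finset_snoc_card_ge S (b := δ * #Z)
    (Q := fun g => IsBipPathFromV G U V (m + 2) g ∧ g 0 = u ∧ v ∉ Set.range g ∧
      G.Adj (g (Fin.last (m + 1))) v) fun f hf => by
    refine ⟨Z.filter (G.Adj (f (Fin.last m))), ?_, fun x hx => ?_⟩
    · simpa [reservoir_self, nbrCount_eq_card_filter] using (hS f hf).typical hm
    obtain ⟨hxZ, hadj⟩ := mem_filter.1 hx
    have hxf := (hS f hf).notMem_range (ne_of_mem_of_not_mem hxZ huZ) (hZW hxZ)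
    have hvx : v ≠ x := fun h => disjoint_left.1 (disjoint_bipPart hUV (by omega)) (h ▸ hv) (hZ hxZ)
    refine ⟨(hS f hf).isBipPath.snoc (hZ hxZ) hxf hadj, by simpa [Fin.snoc] using (hS f hf).head,
      ?_, by simpa using (hvZ x hxZ).symm⟩
    rw [Fin.range_snoc, Set.mem_insert_iff, not_or]
    exact ⟨hvx, (hS f hf).notMem_range huv.symm hvW⟩
  obtain ⟨S₃, hS₃, hS₃path⟩ := exists_finset_snoc_card_ge S₂ (b := 1)
    (Q := fun g => IsBipPathFromV G U V (m + 3) g ∧ g 0 = u ∧ g (Fin.last (m + 2)) = v)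
    fun g hg => by
    obtain ⟨hpath, hhead, hvg, hadj⟩ := hS₂path g hg
    refine ⟨{v}, by simp, fun x hx => ?_⟩
    rw [mem_singleton.1 hx]
    exact ⟨hpath.snoc hv hvg hadj, by simpa [Fin.snoc] using hhead, Fin.snoc_last _ _⟩
  exact ⟨S₃, hS₂.trans (by simpa using hS₃), hS₃path⟩

theorem exists_finset_isBipPathFromV (hUV : Disjoint U V) {r : ℝ}
    (hr : 0 < r) {n : ℕ} (hrd : 5 * r < dens G U V) (hrn : 125 ≤ r ^ 2 * n) (hU : n ≤ #U)
    (hV : n ≤ #V) (hreg : IsRegularPair G U V (r ^ 2)) {u v : α} (huv : u ≠ v) (hu : u ∈ V)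
    (hm : m ≠ 0) (hmn : (m + 2 : ℝ) ≤ 2 * (1 - 2 * r) * n) (hv : v ∈ bipPart U V (m + 2))
    (hdegu : (dens G U V - r ^ 2) * #U ≤ nbrCount G u U)
    (hdegv : (dens G U V - r ^ 2) * #(bipPart U V (m + 1)) ≤ nbrCount G v (bipPart U V (m + 1))) :
    ∃ S : Finset (Fin (m + 3) → α),
      |dens G U V - 7 * r| ^ (m + 1) * (r ^ 2 * n) * ∏ j ∈ range m, (n - ((j + 1) / 2 : ℕ) : ℝ)
        ≤ #S ∧ ∀ f ∈ S, IsBipPathFromV G U V (m + 3) f ∧ f 0 = u ∧ f (Fin.last (m + 2)) = v := by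
  have hn : 0 < n := Nat.pos_of_ne_zero fun h => by simp [h] at hrn; linarith
  have hd1 : dens G U V ≤ 1 :=
    dens_le_one (card_pos.1 (hn.trans_le hU)) (card_pos.1 (hn.trans_le hV))
  set d := dens G U V
  set X := bipPart U V (m + 1)
  have hXn : (n : ℝ) ≤ #X := by exact_mod_cast le_card_bipPart hU hV _
  obtain ⟨Z, hZX, hvZ, huZ, hZlo, hZhi⟩ := exists_subset_adj_card (ε := r ^ 2) (by positivity)
    (by nlinarith [mul_le_mul_of_nonneg_left hXn hr.le] : r ^ 2 * #X + 2 ≤ nbrCount G v X) u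
  have hW := card_bipPart_inter_insert_le hUV (by positivity) hZX hZhi u v
  obtain ⟨S₁, hS₁, hS₁good⟩ := exists_finset_isGoodPrefix hUV hr hrd hd1 hrn hU hV hreg
    (by linarith) hZX hZlo hW hu (mem_insert_self u _) hdegu
  obtain ⟨S, hS, hSpath⟩ := exists_finset_close hUV hm hZX
    ((subset_insert _ _).trans (subset_insert _ _)) huZ hvZ huv
    (mem_insert_of_mem (mem_insert_self v Z)) hv S₁ hS₁good
  refine ⟨S, ?_, hSpath⟩
  have hZstep : |d - 7 * r| * (r ^ 2 * n) ≤ (d - r ^ 2) * #Z :=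
    abs_sub_mul_le_sub_mul hr hrd hd1 (by nlinarith) n.cast_nonneg
  calc _ = (∏ j ∈ range m, |d - 7 * r| * (n - ((j + 1) / 2 : ℕ) : ℝ)) *
        (|d - 7 * r| * (r ^ 2 * n)) := by
        rw [prod_mul_distrib, prod_const, card_range]; ring
    _ ≤ #S₁ * ((d - r ^ 2) * #Z) :=
        mul_le_mul hS₁ hZstep (by positivity) (Nat.cast_nonneg _)
    _ ≤ #S := hS

end GreedyPaths

section Endpoints

variable {α : Type*} {G : SimpleGraph α} {U V : Finset α}

theorem mem_bipPart_and_nbrCount_ge_of_parity {v : α} {l : ℕ} {c : ℝ} (hv : v ∈ U ∨ v ∈ V)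
    (hodd : v ∈ U → Odd l) (heven : v ∈ V → Even l) (hdegU : v ∈ U → c * #V ≤ nbrCount G v V)
    (hdegV : v ∈ V → c * #U ≤ nbrCount G v U) :
    v ∈ bipPart U V l ∧ c * #(bipPart U V (l + 1)) ≤ nbrCount G v (bipPart U V (l + 1)) := by
  rcases hv with hv | hv
  · have hl : l % 2 = 1 := Nat.odd_iff.1 (hodd hv)
    simpa [bipPart, hl, Nat.add_mod] using ⟨hv, hdegU hv⟩
  · have hl : l % 2 = 0 := Nat.even_iff.1 (heven hv)
    simpa [bipPart, hl, Nat.add_mod] using ⟨hv, hdegV hv⟩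

theorem finite_setOf_isAltPath (A B : Finset α) (l : ℕ) :
    {f : Fin (l + 1) → α | IsAltPath G A B l f}.Finite :=
  (Set.Finite.pi (t := fun _ => (A ∪ B : Set α)) fun _ =>
    A.finite_toSet.union B.finite_toSet).subset fun _ hf i _ => hf.2.1 i

end Endpoints

theorem le_natCard_altPaths_of_mem_right {α : Type*} (G : SimpleGraph α) (U V : Finset α)
    (hUV : Disjoint U V) {ε : ℝ} (hε : 0 < ε) {n : ℕ} (hU : n ≤ #U) (hV : n ≤ #V)
    (hn : 5 * ε⁻¹ ^ 2 ≤ (n : ℝ)) (hreg : IsRegularPair G U V ε) (hd : 5 * √ε < dens G U V)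
    {u v : α} (huv : u ≠ v) (hu : u ∈ V) {l : ℕ} (hl3 : 3 ≤ l)
    (hl2 : (l : ℝ) ≤ 2 * (1 - 2 * √ε) * n) (hv : v ∈ bipPart U V l)
    (hdegu : (dens G U V - ε) * #U ≤ nbrCount G u U)
    (hdegv : (dens G U V - ε) * #(bipPart U V (l + 1)) ≤ nbrCount G v (bipPart U V (l + 1))) :
    (dens G U V - 7 * √ε) ^ (l - 1) * (ε * n) * ∏ i ∈ Icc 1 (l - 2), ((n : ℝ) - ((i / 2 : ℕ) : ℝ))
      ≤ Nat.card {f : Fin (l + 1) → α // IsAltPath G U V l f ∧ f 0 = u ∧ f (Fin.last l) = v} := by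
  classical
  obtain ⟨r, hr, rfl⟩ : ∃ r, 0 < r ∧ ε = r ^ 2 :=
    ⟨√ε, Real.sqrt_pos.2 hε, (Real.sq_sqrt hε.le).symm⟩
  rw [Real.sqrt_sq hr.le] at hd hl2 ⊢
  obtain ⟨m, rfl⟩ : ∃ m, l = m + 2 := ⟨l - 2, by omega⟩
  have hn0 : 0 < n := by
    have : (0 : ℝ) < n := lt_of_lt_of_le (by positivity) hn
    exact_mod_cast this
  have hr5 : r < 1 / 5 := by
    linarith [dens_le_one (G := G) (card_pos.1 (hn0.trans_le hU)) (card_pos.1 (hn0.trans_le hV))]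
  rw [bipPart_eq_of_mod_two_eq (by omega : (m + 2 + 1) % 2 = (m + 1) % 2)] at hdegv
  obtain ⟨S, hS, hSpath⟩ :=
    exists_finset_isBipPathFromV hUV hr hd (le_sq_mul_of_inv_sq_le hr hr5 hn)
    hU hV hreg huv hu (m := m) (by omega) (by push_cast at hl2; linarith) hv hdegu hdegv
  have hprod : ∏ i ∈ Icc 1 m, ((n : ℝ) - ((i / 2 : ℕ) : ℝ)) =
      ∏ j ∈ range m, ((n : ℝ) - (((j + 1) / 2 : ℕ) : ℝ)) := by
    rw [← Ico_add_one_right_eq_Icc, prod_Ico_eq_prod_range, Nat.add_sub_cancel]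
    simp only [add_comm 1]
  have hprod0 : 0 ≤ ∏ j ∈ range m, ((n : ℝ) - (((j + 1) / 2 : ℕ) : ℝ)) := by
    refine prod_nonneg fun j hj => sub_nonneg.2 ?_
    have : (2 * ((j + 1) / 2 : ℕ) : ℝ) ≤ m := by
      exact_mod_cast (by have := mem_range.1 hj; omega : 2 * ((j + 1) / 2) ≤ m)
    push_cast at hl2 ⊢
    nlinarith
  rw [show m + 2 - 1 = m + 1 by omega, Nat.add_sub_cancel, hprod]
  calc _ ≤ |dens G U V - 7 * r| ^ (m + 1) * (r ^ 2 * n) *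
        ∏ j ∈ range m, ((n : ℝ) - (((j + 1) / 2 : ℕ) : ℝ)) := by
        refine mul_le_mul_of_nonneg_right (mul_le_mul_of_nonneg_right ?_ (by positivity)) hprod0
        exact (le_abs_self _).trans (abs_pow _ _).le
    _ ≤ #S := hS
    _ ≤ _ := by
      exact_mod_cast card_le_natCard_of_forall_mem
        (p := fun f => IsAltPath G U V (m + 2) f ∧ f 0 = u ∧ f (Fin.last (m + 2)) = v)
        ((finite_setOf_isAltPath U V (m + 2)).subset fun f hf => hf.1) fun f hf =>
          ⟨(hSpath f hf).1.isAltPath, (hSpath f hf).2⟩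

/-- counting paths of length `l` between two fixed vertices of large degree
in a regular pair (Lemma 2.7 of the paper). -/
theorem count_paths_between_vertices {Om : Type*} (G : SimpleGraph Om) (U V : Finset Om)
    (hdisj : Disjoint U V) (ε : ℝ) (hε : 0 < ε) (n : ℕ)
    (hU : n ≤ U.card) (hV : n ≤ V.card) (hn : 5 * ε⁻¹ ^ 2 ≤ (n : ℝ))
    (hreg : IsRegularPair G U V ε)
    (hd : 5 * Real.sqrt ε < dens G U V)
    (u v : Om) (huv : u ≠ v) (hu : u ∈ U ∨ u ∈ V) (hv : v ∈ U ∨ v ∈ V)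
    (hdegu1 : u ∈ U → (dens G U V - ε) * V.card ≤ (nbrCount G u V : ℝ))
    (hdegu2 : u ∈ V → (dens G U V - ε) * U.card ≤ (nbrCount G u U : ℝ))
    (hdegv1 : v ∈ U → (dens G U V - ε) * V.card ≤ (nbrCount G v V : ℝ))
    (hdegv2 : v ∈ V → (dens G U V - ε) * U.card ≤ (nbrCount G v U : ℝ))
    (l : ℕ) (hl3 : 3 ≤ l) (hl2 : (l : ℝ) ≤ 2 * (1 - 2 * Real.sqrt ε) * n)
    (hpar_same : ((u ∈ U ∧ v ∈ U) ∨ (u ∈ V ∧ v ∈ V)) → Even l)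
    (hpar_diff : ((u ∈ U ∧ v ∈ V) ∨ (u ∈ V ∧ v ∈ U)) → Odd l) :
    (dens G U V - 7 * Real.sqrt ε) ^ (l - 1) * (ε * n) *
        ∏ i ∈ Finset.Icc 1 (l - 2), ((n : ℝ) - ((i / 2 : ℕ) : ℝ))
      ≤ (Nat.card {f : Fin (l + 1) → Om //
          IsAltPath G U V l f ∧ f 0 = u ∧ f (Fin.last l) = v} : ℝ) := by
  rcases hu with hu | hu
  · rw [dens_comm U V] at hd hdegu1 hdegv1 hdegv2 ⊢
    obtain ⟨hvl, hdegv⟩ := mem_bipPart_and_nbrCount_ge_of_parity hv.symm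
      (fun h => hpar_diff (Or.inl ⟨hu, h⟩)) (fun h => hpar_same (Or.inl ⟨hu, h⟩)) hdegv2 hdegv1
    refine (le_natCard_altPaths_of_mem_right G V U hdisj.symm hε hV hU hn hreg.symm hd huv hu hl3
      hl2 hvl (hdegu1 hu) hdegv).trans_eq ?_
    exact congrArg Nat.cast
      (Nat.card_congr (Equiv.subtypeEquivRight fun f => by rw [isAltPath_comm]))
  · obtain ⟨hvl, hdegv⟩ := mem_bipPart_and_nbrCount_ge_of_parity hv
      (fun h => hpar_diff (Or.inr ⟨hu, h⟩)) (fun h => hpar_same (Or.inr ⟨hu, h⟩)) hdegv1 hdegv2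
    exact le_natCard_altPaths_of_mem_right G U V hdisj hε hU hV hn hreg hd huv hu hl3 hl2 hvl
      (hdegu2 hu) hdegv
end

section
/- For every positive integer t and every two-coloring of the edges of the complete graph K_n, there exist a vertex subset W with |W| ≥ n − 28t and a color (red or blue) such that W is (t,3)-well-connected in the graph of that color. -/
open Finset

/-!
Call a vertex *low* if its red degree is at most `5t`. If there are `3t` low vertices, all but
`15t` vertices have fewer than `t` red neighbours among them, so any two of the remaining vertices
have `t` common blue neighbours.

Otherwise take a maximal family `M` of disjoint pairs `(u, v)`, `u` not low, that are not joined by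
`t` short red paths. If `|M| < 3t`, deleting the low vertices and the pairs of `M` leaves a red
well-connected set. If `|M| ≥ 3t`, each pair of `M` gives a blue `Gadget`: `u` and `v` have fewer
than `t` common red neighbours plus edges of a maximal red matching between their private red
neighbourhoods `X` and `Y`. Deleting these together with `u, v` (a set `D` of at most `2t`
vertices) leaves `X' ⊆ X` and `Y' ⊆ Y` with `X'` blue to `v` and to `Y'`, while every other vertex
is blue to `u` or in `X'`, and blue to `v` or in `Y'`. So any two vertices outside `D` are joined
by a blue path of length at most `3` through `u`, `v` and any one vertex of `X'`. All but `6t`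
vertices lie in `D` for fewer than `t` of the `3t` gadgets, so two such vertices share `t` usable
gadgets, and Hall's theorem picks distinct vertices of their `X'` to make the `t` paths disjoint.
-/

open SimpleGraph

theorem Finset.exists_injective_forall_mem_of_card_le {ι α : Type*} [Fintype ι] [DecidableEq α]
    (S : ι → Finset α) (h : ∀ i, Fintype.card ι ≤ #(S i)) :
    ∃ f : ι → α, Function.Injective f ∧ ∀ i, f i ∈ S i := by
  refine (all_card_le_biUnion_card_iff_exists_injective S).1 fun s => ?_
  rcases s.eq_empty_or_nonempty with rfl | ⟨i, hi⟩
  · simp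
  · exact (card_le_univ s).trans ((h i).trans (card_le_card (subset_biUnion_of_mem S hi)))

namespace SimpleGraph

variable {V : Type*} {G : SimpleGraph V} {t : ℕ} {p q : V}

def Linked (G : SimpleGraph V) (t l : ℕ) (u v : V) : Prop :=
  ∃ P : Fin t → G.Walk u v, Function.Injective P ∧
    (∀ i, (P i).IsPath ∧ (P i).length ≤ l) ∧
    (∀ i j, i ≠ j → ∀ x, x ∈ (P i).support → x ∈ (P j).support → x = u ∨ x = v)

theorem exists_path_via {a b : V} (hpq : p ≠ q) (hpa : G.Adj p a)
    (hab : a = b ∨ G.Adj a b) (hbq : G.Adj b q) (haq : a ≠ q) (hbp : b ≠ p) :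
    ∃ w : G.Walk p q, w.IsPath ∧ w.length ≤ 3 ∧ a ∈ w.support ∧
      ∀ x ∈ w.support, x ≠ p → x ≠ q → x ∈ ({a, b} : Set V) := by
  rcases hab with rfl | hab
  · refine ⟨.cons hpa (.cons hbq .nil), ?_, by simp, by simp, ?_⟩
    · simp [Walk.isPath_def, hpa.ne, hpq, haq]
    · simp +contextual
  · refine ⟨.cons hpa (.cons hab (.cons hbq .nil)), ?_, by simp, by simp, ?_⟩
    · simp [Walk.isPath_def, hpa.ne, hpq, haq, hab.ne, hbq.ne, hbp.symm]
    · simp +contextual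

theorem linked_of_connectors (hpq : p ≠ q)
    (a b : Fin t → V) (hdisj : Pairwise fun i j => Disjoint ({a i, b i} : Set V) {a j, b j})
    (hpa : ∀ i, G.Adj p (a i)) (hab : ∀ i, a i = b i ∨ G.Adj (a i) (b i))
    (hbq : ∀ i, G.Adj (b i) q) (haq : ∀ i, a i ≠ q) (hbp : ∀ i, b i ≠ p) :
    G.Linked t 3 p q := by
  choose P hpath hlen ha hsupp using
    fun i => exists_path_via hpq (hpa i) (hab i) (hbq i) (haq i) (hbp i)
  have hshared : ∀ i j x, x ∈ (P i).support → x ∈ (P j).support → x ≠ p → x ≠ q → i = j := by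
    intro i j x hi hj hp hq
    by_contra hij
    exact Set.disjoint_left.1 (hdisj hij) (hsupp i x hi hp hq) (hsupp j x hj hp hq)
  refine ⟨P, fun i j hPij => ?_, fun i => ⟨hpath i, hlen i⟩, fun i j hij x hi hj => ?_⟩
  · exact hshared i j (a i) (ha i) (hPij ▸ ha i) (hpa i).ne' (haq i)
  · by_contra! h
    exact hij (hshared i j x hi hj h.1 h.2)

theorem linked_of_connector_finset (hpq : p ≠ q)
    (S : Finset (V × V)) (ht : t ≤ #S)
    (hS : (S : Set (V × V)).PairwiseDisjoint fun e => ({e.1, e.2} : Set V))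
    (hconn : ∀ e ∈ S, G.Adj p e.1 ∧ (e.1 = e.2 ∨ G.Adj e.1 e.2) ∧ G.Adj e.2 q ∧ e.1 ≠ q ∧ e.2 ≠ p) :
    G.Linked t 3 p q := by
  classical
  obtain ⟨f, hf, hfS⟩ := exists_injective_forall_mem_of_card_le (fun _ : Fin t => S)
    fun _ => by simpa using ht
  exact linked_of_connectors hpq (fun i => (f i).1) (fun i => (f i).2)
    (fun i j hij => hS (hfS i) (hfS j) (hf.ne hij)) (fun i => (hconn _ (hfS i)).1)
    (fun i => (hconn _ (hfS i)).2.1) (fun i => (hconn _ (hfS i)).2.2.1)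
    (fun i => (hconn _ (hfS i)).2.2.2.1) (fun i => (hconn _ (hfS i)).2.2.2.2)

theorem linked_of_common_neighbors_and_matching [DecidableEq V] {u v : V} (huv : u ≠ v)
    (C : Finset V) (hC : ∀ c ∈ C, G.Adj u c ∧ G.Adj v c) (M : Finset (V × V))
    (hMdisj : (M : Set (V × V)).PairwiseDisjoint fun e => ({e.1, e.2} : Set V))
    (hM : ∀ e ∈ M, (G.Adj u e.1 ∧ ¬ G.Adj v e.1 ∧ e.1 ≠ v) ∧
      (G.Adj v e.2 ∧ ¬ G.Adj u e.2 ∧ e.2 ≠ u) ∧ G.Adj e.1 e.2)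
    (ht : t ≤ #C + #M) : G.Linked t 3 u v := by
  have hdisj : Disjoint (C.image fun c => (c, c)) M := by
    rw [Finset.disjoint_left]
    rintro _ he heM
    obtain ⟨c, hc, rfl⟩ := mem_image.1 he
    exact (hM _ heM).1.2.1 (hC c hc).2
  refine linked_of_connector_finset huv (C.image (fun c => (c, c)) ∪ M) ?_ ?_ ?_
  · rwa [card_union_of_disjoint hdisj,
      card_image_of_injective _ fun a b h => congrArg Prod.fst h]
  · rw [coe_union, Set.pairwiseDisjoint_union]
    refine ⟨?_, hMdisj, ?_⟩
    · rintro _ he _ he' hne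
      obtain ⟨c, -, rfl⟩ := mem_image.1 he
      obtain ⟨c', -, rfl⟩ := mem_image.1 he'
      simpa [eq_comm] using hne
    · rintro _ he e heM -
      obtain ⟨c, hc, rfl⟩ := mem_image.1 he
      have := hM e heM
      have := hC c hc
      simp only [Set.disjoint_insert_left, Set.disjoint_insert_right, Set.disjoint_singleton_left,
        Set.mem_insert_iff, Set.mem_singleton_iff] at *
      grind
  · intro e he
    rcases mem_union.1 he with he | he
    · obtain ⟨c, hc, rfl⟩ := mem_image.1 he
      exact ⟨(hC c hc).1, .inl rfl, (hC c hc).2.symm, (hC c hc).2.ne', (hC c hc).1.ne'⟩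
    · obtain ⟨⟨hu1, -, hv1⟩, ⟨hv2, -, hu2⟩, h12⟩ := hM e he
      exact ⟨hu1, .inr h12, hv2.symm, hv1, hu2⟩

end SimpleGraph

theorem wellConnected_iff {V : Type*} {G : SimpleGraph V} {W : Set V} {t l : ℕ} :
    WellConnected G W t l ↔ ∀ u ∈ W, ∀ v ∈ W, u ≠ v → G.Linked t l u v := Iff.rfl

section Counting

variable {V ι : Type*} [DecidableEq V]

def pairCover (M : Finset (V × V)) : Finset V := M.biUnion fun e => {e.1, e.2}

theorem mem_pairCover {M : Finset (V × V)} {x : V} :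
    x ∈ pairCover M ↔ ∃ e ∈ M, x = e.1 ∨ x = e.2 := by
  simp [pairCover]

theorem card_pairCover_le (M : Finset (V × V)) : #(pairCover M) ≤ 2 * #M :=
  card_biUnion_le.trans <| by
    simpa [mul_comm] using sum_le_card_nsmul M _ 2 fun _ _ => card_le_two

variable [Fintype V]

theorem exists_maximal_disjoint_pairs (r : V → V → Prop) :
    ∃ M : Finset (V × V), (∀ e ∈ M, r e.1 e.2) ∧
      (M : Set (V × V)).PairwiseDisjoint (fun e => ({e.1, e.2} : Set V)) ∧
      ∀ x y, r x y → x ∈ pairCover M ∨ y ∈ pairCover M := by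
  classical
  let Valid (M : Finset (V × V)) : Prop := (∀ e ∈ M, r e.1 e.2) ∧
    (M : Set (V × V)).PairwiseDisjoint (fun e => ({e.1, e.2} : Set V))
  obtain ⟨M, hM, hmax⟩ := exists_max_image {M | Valid M} card ⟨∅, by simp [Valid]⟩
  simp only [mem_filter, mem_univ, true_and] at hM hmax
  refine ⟨M, hM.1, hM.2, fun x y hxy => ?_⟩
  by_contra! hfree
  simp only [mem_pairCover, not_exists, not_and, not_or] at hfree
  have hnew : (x, y) ∉ M := fun h => (hfree.1 _ h).1 rfl
  have hins : Valid (insert (x, y) M) := by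
    refine ⟨forall_mem_insert _ _ _ |>.2 ⟨hxy, hM.1⟩, ?_⟩
    rw [coe_insert]
    refine hM.2.insert fun e he _ => ?_
    have := hfree.1 e he
    have := hfree.2 e he
    simp only [Set.disjoint_insert_left, Set.disjoint_singleton_left, Set.mem_insert_iff,
      Set.mem_singleton_iff]
    grind
  have := hmax _ hins
  rw [card_insert_of_notMem hnew] at this
  omega

def heavyVertices (I : Finset ι) (D : ι → Finset V) (t : ℕ) : Finset V :=
  {w | t ≤ #{i ∈ I | w ∈ D i}}

theorem card_heavyVertices_mul_le {I : Finset ι} {D : ι → Finset V} {t d : ℕ}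
    (hD : ∀ i ∈ I, #(D i) ≤ d) : #(heavyVertices I D t) * t ≤ #I * d :=
  calc #(heavyVertices I D t) * t
      ≤ ∑ w ∈ heavyVertices I D t, #{i ∈ I | w ∈ D i} := by
        simpa [heavyVertices] using card_nsmul_le_sum _ _ t fun w hw => (mem_filter.1 hw).2
    _ ≤ ∑ w, #{i ∈ I | w ∈ D i} := sum_le_sum_of_subset (subset_univ _)
    _ = ∑ i ∈ I, #(D i) := by
        simp_rw [card_eq_sum_ones, sum_filter]
        rw [sum_comm]
        simp
    _ ≤ #I * d := by simpa using sum_le_card_nsmul I _ d hD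

theorem card_add_le_card_filter_notMem {I : Finset ι} {D : ι → Finset V} {t : ℕ} {p q : V}
    (hp : p ∉ heavyVertices I D t) (hq : q ∉ heavyVertices I D t) :
    #I + 2 ≤ #{i ∈ I | p ∉ D i ∧ q ∉ D i} + 2 * t := by
  classical
  simp only [heavyVertices, mem_filter, mem_univ, true_and, not_le] at hp hq
  have hcover : I ⊆ {i ∈ I | p ∉ D i ∧ q ∉ D i} ∪ {i ∈ I | p ∈ D i} ∪ {i ∈ I | q ∈ D i} := by
    intro i hi
    simp only [mem_union, mem_filter, hi, true_and]
    tauto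
  have := card_le_card hcover
  have := card_union_le ({i ∈ I | p ∉ D i ∧ q ∉ D i} ∪ {i ∈ I | p ∈ D i}) {i ∈ I | q ∈ D i}
  have := card_union_le {i ∈ I | p ∉ D i ∧ q ∉ D i} {i ∈ I | p ∈ D i}
  omega

end Counting

section Gadget

variable {V : Type*}

/-- The blue structure left by a pair `u, v` that is not joined by `t` short red paths
(here `G` is the blue graph). -/
structure Gadget (G : SimpleGraph V) (t : ℕ) where
  u : V
  v : V
  D : Finset V
  X : Finset V
  Y : Finset V
  u_mem_D : u ∈ D
  v_mem_D : v ∈ D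
  card_D_le : #D ≤ 2 * t
  le_card_X : 3 * t + 2 ≤ #X
  adj_v_of_mem_X : ∀ x ∈ X, G.Adj v x
  adj_of_mem_X_of_mem_Y : ∀ x ∈ X, ∀ y ∈ Y, G.Adj x y
  mem_X_of_not_adj_u : ∀ w ∉ D, ¬ G.Adj u w → w ∈ X
  mem_Y_of_not_adj_v : ∀ w ∉ D, ¬ G.Adj v w → w ∈ Y

namespace Gadget

variable {G : SimpleGraph V} {t : ℕ}

theorem exists_connector (g : Gadget G t) {p q x : V} (hp : p ∉ g.D) (hq : q ∉ g.D)
    (hx : x ∈ g.X) (hxp : x ≠ p) (hxq : x ≠ q) :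
    ∃ a b, a ∈ ({g.u, g.v, x} : Set V) ∧ b ∈ ({g.u, g.v, x} : Set V) ∧
      G.Adj p a ∧ (a = b ∨ G.Adj a b) ∧ G.Adj b q ∧ a ≠ q ∧ b ≠ p := by
  have hup : g.u ≠ p := ne_of_mem_of_not_mem g.u_mem_D hp
  have huq : g.u ≠ q := ne_of_mem_of_not_mem g.u_mem_D hq
  have hvp : g.v ≠ p := ne_of_mem_of_not_mem g.v_mem_D hp
  have hvq : g.v ≠ q := ne_of_mem_of_not_mem g.v_mem_D hq
  by_cases hu : G.Adj g.u p ∧ G.Adj g.u q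
  · exact ⟨g.u, g.u, by simp, by simp, hu.1.symm, .inl rfl, hu.2, huq, hup⟩
  by_cases hv : G.Adj g.v p ∧ G.Adj g.v q
  · exact ⟨g.v, g.v, by simp, by simp, hv.1.symm, .inl rfl, hv.2, hvq, hvp⟩
  by_cases hup' : G.Adj g.u p
  · have hqX := g.mem_X_of_not_adj_u q hq fun h => hu ⟨hup', h⟩
    have hvq' := g.adj_v_of_mem_X q hqX
    have hpY := g.mem_Y_of_not_adj_v p hp fun h => hv ⟨h, hvq'⟩
    exact ⟨x, g.v, by simp, by simp, (g.adj_of_mem_X_of_mem_Y x hx p hpY).symm,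
      .inr (g.adj_v_of_mem_X x hx).symm, hvq', hxq, hvp⟩
  · have hpX := g.mem_X_of_not_adj_u p hp hup'
    have hvp' := g.adj_v_of_mem_X p hpX
    have hqY := g.mem_Y_of_not_adj_v q hq fun h => hv ⟨hvp', h⟩
    exact ⟨g.v, x, by simp, by simp, hvp'.symm, .inr (g.adj_v_of_mem_X x hx),
      g.adj_of_mem_X_of_mem_Y x hx q hqY, hvq, hxp⟩

end Gadget

variable {G : SimpleGraph V} {t : ℕ} [DecidableEq V]

theorem linked_of_gadgets {p q : V} (hpq : p ≠ q) (g : Fin t → Gadget G t)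
    (hg : Pairwise fun i j => Disjoint ({(g i).u, (g i).v} : Set V) {(g j).u, (g j).v})
    (hp : ∀ i, p ∉ (g i).D) (hq : ∀ i, q ∉ (g i).D) : G.Linked t 3 p q := by
  set B : Finset V := {p, q} ∪ univ.image (fun i => (g i).u) ∪ univ.image (fun i => (g i).v)
    with hB
  have hBcard : #B ≤ 2 * t + 2 := by
    have := card_union_le ({p, q} ∪ univ.image fun i => (g i).u) (univ.image fun i => (g i).v)
    have := card_union_le {p, q} (univ.image fun i => (g i).u)
    have := card_le_two (a := p) (b := q)
    have := card_image_le (s := (univ : Finset (Fin t))) (f := fun i => (g i).u)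
    have := card_image_le (s := (univ : Finset (Fin t))) (f := fun i => (g i).v)
    simp only [card_univ, Fintype.card_fin] at *
    rw [hB]
    omega
  obtain ⟨x, hxinj, hx⟩ := exists_injective_forall_mem_of_card_le (fun i => (g i).X \ B)
    fun i => by
      have := le_card_sdiff B (g i).X
      have := (g i).le_card_X
      simp only [Fintype.card_fin]
      omega
  simp only [hB, mem_sdiff, mem_union, mem_insert, mem_singleton, mem_image, mem_univ, true_and,
    not_or, not_exists] at hx
  choose a b ha hb hpa hab hbq haq hbp using
    fun i => (g i).exists_connector (hp i) (hq i) (hx i).1 (hx i).2.1.1.1 (hx i).2.1.1.2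
  refine linked_of_connectors hpq a b (fun i j hij => ?_) hpa hab hbq haq hbp
  refine Disjoint.mono (Set.pair_subset (ha i) (hb i)) (Set.pair_subset (ha j) (hb j)) ?_
  have := hg hij
  have := hxinj.ne hij
  simp only [Set.disjoint_insert_left, Set.disjoint_insert_right, Set.disjoint_singleton_left,
    Set.mem_insert_iff, Set.mem_singleton_iff] at *
  grind

theorem exists_wellConnected_of_gadgets [Fintype V] (ht : 0 < t) (g : Fin (3 * t) → Gadget G t)
    (hg : Pairwise fun i j => Disjoint ({(g i).u, (g i).v} : Set V) {(g j).u, (g j).v}) :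
    ∃ W : Finset V, Fintype.card V - 6 * t ≤ #W ∧ WellConnected G W t 3 := by
  set H := heavyVertices univ (fun i => (g i).D) t
  have hH : #H ≤ 6 * t := by
    have := card_heavyVertices_mul_le (I := univ) (t := t) fun i _ => (g i).card_D_le
    simp only [card_univ, Fintype.card_fin] at this
    exact Nat.le_of_mul_le_mul_right (this.trans_eq (by ring)) ht
  refine ⟨Hᶜ, by rw [card_compl]; omega, wellConnected_iff.2 fun p hp q hq hpq => ?_⟩
  simp only [coe_compl, Set.mem_compl_iff, mem_coe] at hp hq
  have hI := card_add_le_card_filter_notMem hp hq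
  obtain ⟨idx, hidx, hidxI⟩ := exists_injective_forall_mem_of_card_le
    (fun _ : Fin t => ({i | p ∉ (g i).D ∧ q ∉ (g i).D} : Finset (Fin (3 * t))))
    fun _ => by simp only [card_univ, Fintype.card_fin] at hI ⊢; omega
  simp only [mem_filter, mem_univ, true_and] at hidxI
  exact linked_of_gadgets hpq (g ∘ idx) (fun i j hij => hg (hidx.ne hij))
    (fun i => (hidxI i).1) (fun i => (hidxI i).2)

end Gadget

section Coloring

variable {V : Type*} [Fintype V] [DecidableEq V] (R : SimpleGraph V) [DecidableRel R.Adj]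
  {t : ℕ}

theorem exists_wellConnected_compl_of_many_low_degree (ht : 0 < t)
    (hlow : 3 * t ≤ #{v | R.degree v ≤ 5 * t}) :
    ∃ W : Finset V, Fintype.card V - 15 * t ≤ #W ∧ WellConnected Rᶜ W t 3 := by
  obtain ⟨Q, hQ, hQcard⟩ := exists_subset_card_eq hlow
  set H := heavyVertices Q (fun x => R.neighborFinset x) t
  have hH : #H ≤ 15 * t := by
    have := card_heavyVertices_mul_le (D := fun x => R.neighborFinset x) (t := t) fun x hx => by
      simpa using (mem_filter.1 (hQ hx)).2
    rw [hQcard] at this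
    exact Nat.le_of_mul_le_mul_right (this.trans_eq (by ring)) ht
  refine ⟨Hᶜ, by rw [card_compl]; omega, wellConnected_iff.2 fun p hp q hq hpq => ?_⟩
  simp only [coe_compl, Set.mem_compl_iff, mem_coe] at hp hq
  have hJ := card_add_le_card_filter_notMem hp hq
  obtain ⟨c, hc, hcJ⟩ := exists_injective_forall_mem_of_card_le
    (fun _ : Fin t => {x ∈ Q | p ∉ R.neighborFinset x ∧ q ∉ R.neighborFinset x} \ {p, q})
    fun _ => by
      have := le_card_sdiff {p, q} {x ∈ Q | p ∉ R.neighborFinset x ∧ q ∉ R.neighborFinset x}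
      have := card_le_two (a := p) (b := q)
      simp only [Fintype.card_fin]
      omega
  simp only [mem_sdiff, mem_filter, mem_neighborFinset, mem_insert, mem_singleton,
    not_or] at hcJ
  refine linked_of_connectors hpq c c (fun i j hij => by simpa using hc.ne hij)
    (fun i => ?_) (fun i => .inl rfl) (fun i => ?_) (fun i => (hcJ i).2.2) (fun i => (hcJ i).2.1)
  · exact (compl_adj R p (c i)).2 ⟨Ne.symm (hcJ i).2.1, fun h => (hcJ i).1.2.1 h.symm⟩
  · exact (compl_adj R (c i) q).2 ⟨(hcJ i).2.2, (hcJ i).1.2.2⟩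

theorem exists_gadget {u v : V} (huv : u ≠ v) (hdeg : 5 * t < R.degree u)
    (hbad : ¬ R.Linked t 3 u v) : ∃ g : Gadget Rᶜ t, g.u = u ∧ g.v = v := by
  set C : Finset V := {w | R.Adj u w ∧ R.Adj v w}
  set X : Finset V := {w | R.Adj u w ∧ ¬ R.Adj v w ∧ w ≠ v}
  set Y : Finset V := {w | R.Adj v w ∧ ¬ R.Adj u w ∧ w ≠ u}
  obtain ⟨M, hMr, hMdisj, hMmax⟩ :=
    exists_maximal_disjoint_pairs fun x y => x ∈ X ∧ y ∈ Y ∧ R.Adj x y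
  have hCM : #C + #M < t := by
    by_contra! h
    exact hbad (linked_of_common_neighbors_and_matching huv C (fun c hc => by simpa [C] using hc)
      M hMdisj (fun e he => by simpa [X, Y] using hMr e he) h)
  have hdegX : R.degree u ≤ #X + #C + 1 := by
    rw [← card_neighborFinset_eq_degree]
    calc #(R.neighborFinset u) ≤ #(X ∪ C ∪ {v}) := card_le_card fun w hw => by
          simp only [mem_neighborFinset] at hw
          simp only [X, C, mem_union, mem_singleton, mem_filter, mem_univ, true_and, hw]
          tauto
      _ ≤ #X + #C + 1 := by
          have := card_union_le (X ∪ C) {v}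
          have := card_union_le X C
          simp only [card_singleton] at *
          omega
  have hcover := card_pairCover_le M
  refine ⟨⟨u, v, {u, v} ∪ C ∪ pairCover M, X \ pairCover M, Y \ pairCover M, by simp, by simp,
    ?_, ?_, ?_, ?_, ?_, ?_⟩, rfl, rfl⟩
  · have := card_union_le ({u, v} ∪ C) (pairCover M)
    have := card_union_le {u, v} C
    have := card_le_two (a := u) (b := v)
    omega
  · have := le_card_sdiff (pairCover M) X
    omega
  · intro x hx
    simp only [X, mem_sdiff, mem_filter, mem_univ, true_and] at hx
    exact (compl_adj R v x).2 ⟨hx.1.2.2.symm, hx.1.2.1⟩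
  · intro x hx y hy
    simp only [X, Y, mem_sdiff, mem_filter, mem_univ, true_and] at hx hy
    refine (compl_adj R x y).2 ⟨fun hxy => hx.1.2.1 (hxy ▸ hy.1.1), fun hadj => ?_⟩
    rcases hMmax x y ⟨by simpa [X] using hx.1, by simpa [Y] using hy.1, hadj⟩ with h | h
    exacts [hx.2 h, hy.2 h]
  · intro w hw hnadj
    simp only [C, X, mem_union, mem_insert, mem_singleton, mem_filter, mem_univ, true_and,
      not_or, mem_sdiff] at hw ⊢
    rw [compl_adj, not_and, not_not] at hnadj
    have := hnadj (Ne.symm hw.1.1.1)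
    exact ⟨⟨this, fun h => hw.1.2 ⟨this, h⟩, hw.1.1.2⟩, hw.2⟩
  · intro w hw hnadj
    simp only [C, Y, mem_union, mem_insert, mem_singleton, mem_filter, mem_univ, true_and,
      not_or, mem_sdiff] at hw ⊢
    rw [compl_adj, not_and, not_not] at hnadj
    have := hnadj (Ne.symm hw.1.1.2)
    exact ⟨⟨this, fun h => hw.1.2 ⟨h, this⟩, hw.1.1.1⟩, hw.2⟩

theorem exists_wellConnected_compl_of_bad_pairs (ht : 0 < t) (M : Finset (V × V))
    (hM : 3 * t ≤ #M)
    (hMdisj : (M : Set (V × V)).PairwiseDisjoint fun e => ({e.1, e.2} : Set V))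
    (hbad : ∀ e ∈ M, 5 * t < R.degree e.1 ∧ e.1 ≠ e.2 ∧ ¬ R.Linked t 3 e.1 e.2) :
    ∃ W : Finset V, Fintype.card V - 6 * t ≤ #W ∧ WellConnected Rᶜ W t 3 := by
  obtain ⟨e, he, heM⟩ :=
    exists_injective_forall_mem_of_card_le (fun _ : Fin (3 * t) => M) fun _ => by simpa using hM
  choose g hgu hgv using fun i => exists_gadget R (hbad _ (heM i)).2.1 (hbad _ (heM i)).1
    (hbad _ (heM i)).2.2
  refine exists_wellConnected_of_gadgets ht g fun i j hij => ?_
  dsimp only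
  rw [hgu, hgv, hgu, hgv]
  exact hMdisj (heM i) (heM j) (he.ne hij)

end Coloring

/-- For every `t ≥ 1` and every two-coloring of `K_n`, there is a vertex
subset `W` with `|W| ≥ n - 28t` that is `(t,3)`-well-connected in one of the colors. -/
theorem exists_well_connected_subset {V : Type*} [Fintype V] (R : SimpleGraph V)
    (t : ℕ) (ht : 0 < t) :
    ∃ W : Finset V, Fintype.card V - 28 * t ≤ W.card ∧
      (WellConnected R (↑W) t 3 ∨ WellConnected Rᶜ (↑W) t 3) := by
  classical
  by_cases hlow : 3 * t ≤ #{v | R.degree v ≤ 5 * t}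
  · obtain ⟨W, hW, hWc⟩ := exists_wellConnected_compl_of_many_low_degree R ht hlow
    exact ⟨W, by omega, Or.inr hWc⟩
  set L : Finset V := {v | R.degree v ≤ 5 * t}
  obtain ⟨M, hMbad, hMdisj, hMmax⟩ := exists_maximal_disjoint_pairs
    fun p q => 5 * t < R.degree p ∧ p ≠ q ∧ ¬ R.Linked t 3 p q
  by_cases hM : 3 * t ≤ #M
  · obtain ⟨W, hW, hWc⟩ := exists_wellConnected_compl_of_bad_pairs R ht M hM hMdisj hMbad
    exact ⟨W, by omega, Or.inr hWc⟩
  refine ⟨(L ∪ pairCover M)ᶜ, ?_, Or.inl (wellConnected_iff.2 fun p hp q hq hpq => ?_)⟩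
  · have := card_union_le L (pairCover M)
    have := card_pairCover_le M
    rw [card_compl]
    omega
  · simp only [coe_compl, Set.mem_compl_iff, mem_coe, mem_union, not_or, L, mem_filter,
      mem_univ, true_and, not_le] at hp hq
    by_contra hlinked
    rcases hMmax p q ⟨hp.1, hpq, hlinked⟩ with h | h
    exacts [hp.2 h, hq.2 h]
end

section
/- Let 0 < α ≤ 10^{−5}. There exists n_0 = n_0(α) such that the following holds for all n ≥ n_0. Suppose a two-coloring of the edges of K_n admits a partition of the vertex set into V and U with |V| ≥ (2/3−α)n and |U| ≥ (1/3−α)n such that the red density within V is at least 1−α and the blue density between U and V is at least 1−α. Then there is a partition of the vertex set into V' and U' such that: |V'| ≥ (2/3−3α)n and |U'| ≥ (1/3−2α)n; every vertex of V' has at least (2/3−4α)|V'| red neighbors in V'; the blue density between U' and V' is at least 1−8α; and every vertex of U' has at least (1/3−4α)|V'| blue neighbors in V'. -/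
open Finset

lemma nbrCount_eq_card {V : Type*} [Fintype V] [DecidableEq V] (G : SimpleGraph V)
    [DecidableRel G.Adj] (x : V) (Y : Finset V) :
    nbrCount G x Y = (Y.filter (G.Adj x)).card := by
  rw [nbrCount, Nat.card_eq_fintype_card,
    Fintype.card_congr (Equiv.subtypeEquivRight (q := fun y => y ∈ Y.filter (G.Adj x))
      (by simp))]
  exact Fintype.card_coe _

lemma eCnt_eq_sum {V : Type*} [Fintype V] [DecidableEq V] (G : SimpleGraph V)
    [DecidableRel G.Adj] (X Y : Finset V) :
    eCnt G X Y = ∑ x ∈ X, (Y.filter (G.Adj x)).card := by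
  rw [eCnt, Nat.card_eq_fintype_card,
    Fintype.card_congr (Equiv.subtypeEquivRight
      (q := fun p : V × V => p ∈ (X ×ˢ Y).filter (fun p => G.Adj p.1 p.2))
      (by simp [Finset.mem_product, and_assoc]))]
  rw [Fintype.card_coe]
  rw [Finset.card_eq_sum_card_fiberwise (f := Prod.fst) (t := X)
    (fun p hp => (Finset.mem_product.1 (Finset.mem_filter.1 hp).1).1)]
  refine Finset.sum_congr rfl fun x hx => ?_
  apply Finset.card_bij (i := fun p _ => p.2)
  · rintro ⟨x', y⟩ hp
    simp only [Finset.mem_filter, Finset.mem_product] at hp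
    obtain ⟨⟨⟨hx1, hy⟩, hadj⟩, rfl⟩ := hp
    simp [hy, hadj]
  · rintro ⟨x1, y1⟩ h1 ⟨x2, y2⟩ h2 h
    simp only [Finset.mem_filter, Finset.mem_product] at h1 h2
    obtain ⟨-, rfl⟩ := h1; obtain ⟨-, rfl⟩ := h2
    simpa using h
  · intro y hy
    simp only [Finset.mem_filter] at hy
    exact ⟨(x, y), by simp [hx, hy.1, hy.2], rfl⟩

lemma keyO (α a o eR s1 s2 : ℝ) (heR : (1-α)*(a*a) ≤ eR)
    (h1 : s1 + (a-o) ≤ (a-o)*a) (h2 : 3*s2 + o ≤ 2*a*o)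
    (hsplit : s1 + s2 = eR) (hs2nn : 0 ≤ s2) (ha3 : 3 < a)
    (hα0 : 0 < α) (hα : α ≤ 1/10^5) (ho0 : 0 ≤ o) : o ≤ 3*α*a + 1 := by
  have hkey : o * (a - 2) ≤ 3 * (α * a * a) - 3 * a := by nlinarith
  nlinarith

lemma keyM (α a u mv S : ℝ) (hms : 2 * a * mv ≤ 3 * S) (hS : S ≤ α * u * a)
    (ha : 0 < a) (hm0 : 0 ≤ mv) : mv ≤ 3/2 * α * u := by
  have h := hms.trans (by linarith : 3 * S ≤ 3 * (α * u * a))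
  nlinarith

lemma gArith (α N a o m : ℝ) (hα0 : 0 < α) (hα : α ≤ 1/10^5)
    (hαN : 10^10 ≤ α * N)
    (haL : (2/3 - α) * N ≤ a) (haU : a ≤ (2/3 + α) * N)
    (ho0 : 0 ≤ o) (hob : o ≤ 3*α*a + 1)
    (hm0 : 0 ≤ m) (hmb : m ≤ 3/2*α*(N - a)) :
    o ≤ 21/10*α*N ∧ m ≤ 51/100*α*N ∧ 0 < N := by
  have hN0 : 0 < N := by nlinarith
  have hαa : α * a ≤ α * ((2/3+α)*N) := by nlinarith
  have hα2N : α * (α * N) ≤ (1/10^5) * (α * N) := by nlinarith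
  have h1 : 10^10 * 1 ≤ α * N := by nlinarith
  refine ⟨by nlinarith, by nlinarith, hN0⟩

lemma g1Arith (α N a o : ℝ) (hα0 : 0 < α) (hα : α ≤ 1/10^5)
    (hαN : 10^10 ≤ α * N) (hα3N : 1 ≤ α*(α*(α*N)))
    (haL : (2/3 - α) * N ≤ a) (hob : o ≤ 3*α*a + 1) :
    (2/3 - 3*α) * N ≤ a - o := by
  have hN0 : 0 < N := by nlinarith
  have h2 : (1 - 3*α) * ((2/3 - α)*N) ≤ (1 - 3*α) * a := by nlinarith
  have hα2N : 1 ≤ α * (α * N) := by nlinarith [mul_pos hα0 (mul_pos hα0 (by nlinarith : (0:ℝ) < α * N))]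
  nlinarith

lemma g2Arith (α N a o m a' : ℝ) (hα0 : 0 < α) (hα : α ≤ 1/10^5)
    (huL : (1/3 - α) * N ≤ N - a) (hαN : 10^10 ≤ α * N)
    (ho0 : 0 ≤ o) (hmb : m ≤ 3/2*α*(N - a)) (ha'u : a' ≤ a - o + m) :
    (1/3 - 2*α) * N ≤ N - a' := by
  have hN0 : 0 < N := by nlinarith
  have h2 : (1 - 3/2*α) * ((1/3 - α)*N) ≤ (1 - 3/2*α) * (N - a) := by nlinarith
  nlinarith

lemma g3Arith (α N a o m a' nbr : ℝ) (hα0 : 0 < α) (hα : α ≤ 1/10^5)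
    (hαN : 10^10 ≤ α * N)
    (haL : (2/3 - α) * N ≤ a)
    (ho0 : 0 ≤ o) (hob : o ≤ 21/10*α*N)
    (hm0 : 0 ≤ m) (hmb : m ≤ 51/100*α*N)
    (ha'u : a' ≤ a - o + m)
    (hnbr : 2/3 * a - o ≤ nbr) :
    (2/3 - 4*α) * a' ≤ nbr := by
  have hN0 : 0 < N := by nlinarith
  have hαa : α * ((2/3-α)*N) ≤ α * a := by nlinarith
  have hα2N : α * (α * N) ≤ (1/10^5) * (α * N) := by nlinarith
  have hαo : α * o ≤ α * (21/10*α*N) := by nlinarith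
  have h1 : (2/3 - 4*α) * a' ≤ (2/3 - 4*α) * (a - o + m) :=
    mul_le_mul_of_nonneg_left ha'u (by linarith)
  have hαm : 0 ≤ α * m := mul_nonneg hα0.le hm0
  linarith

lemma g4Arith (α N a o m a' nbr : ℝ) (hα0 : 0 < α) (hα : α ≤ 1/10^5)
    (hαN : 10^10 ≤ α * N)
    (haL : (2/3 - α) * N ≤ a)
    (ho0 : 0 ≤ o) (hob : o ≤ 21/10*α*N)
    (hm0 : 0 ≤ m) (hmb : m ≤ 51/100*α*N)
    (ha'u : a' ≤ a - o + m)
    (hnbr : 1/3 * a - o ≤ nbr) :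
    (1/3 - 4*α) * a' ≤ nbr := by
  have hN0 : 0 < N := by nlinarith
  have hαa : α * ((2/3-α)*N) ≤ α * a := by nlinarith
  have hα2N : α * (α * N) ≤ (1/10^5) * (α * N) := by nlinarith
  have hαo : α * o ≤ α * (21/10*α*N) := by nlinarith
  have h1 : (1/3 - 4*α) * a' ≤ (1/3 - 4*α) * (a - o + m) :=
    mul_le_mul_of_nonneg_left ha'u (by linarith)
  have hαm : 0 ≤ α * m := mul_nonneg hα0.le hm0
  linarith

lemma g5Arith (α N a o m a' b' : ℝ) (hα0 : 0 < α) (hα : α ≤ 1/10^5)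
    (hαN : 10^10 ≤ α * N)
    (haL : (2/3 - α) * N ≤ a) (haU : a ≤ (2/3 + α) * N)
    (huL : (1/3 - α) * N ≤ N - a) (huU : N - a ≤ (1/3 + α) * N)
    (ho0 : 0 ≤ o) (hob : o ≤ 21/10*α*N)
    (hm0 : 0 ≤ m) (hmb : m ≤ 51/100*α*N)
    (hb'l : (N - a) - m ≤ b') (hb'u : b' ≤ (N - a) + o)
    (ha'l : a - o ≤ a') :
    α*(N-a)*a + (2*a*o)/3 + b'*m ≤ 8*α*(b'*a') := by
  have hN0 : 0 < N := by nlinarith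
  have hαupp : α * N ≤ (1/10^5) * N := by nlinarith
  have hb'l2 : 33/100*N ≤ b' := by linarith
  have hb'u2 : b' ≤ 35/100*N := by linarith
  have ha'l2 : 66/100*N ≤ a' := by linarith
  have haU2 : a ≤ 67/100*N := by linarith
  have haL2 : 0 ≤ a := by linarith
  have huU2 : N - a ≤ 34/100*N := by linarith
  have t1 : α*(N-a)*a ≤ α*((34/100*N)*(67/100*N)) := by
    have h := mul_le_mul huU2 haU2 haL2 (by linarith : (0:ℝ) ≤ 34/100*N)
    calc α*(N-a)*a = α*((N-a)*a) := by ring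
    _ ≤ α*((34/100*N)*(67/100*N)) := mul_le_mul_of_nonneg_left h hα0.le
  have t2 : (2*a*o)/3 ≤ (2*((67/100*N)*(21/10*α*N)))/3 := by
    have h := mul_le_mul haU2 hob ho0 (by linarith : (0:ℝ) ≤ 67/100*N)
    linarith [h]
  have t3 : b'*m ≤ (35/100*N)*(51/100*α*N) :=
    mul_le_mul hb'u2 hmb hm0 (by linarith : (0:ℝ) ≤ 35/100*N)
  have t4 : 8*α*((33/100*N)*(66/100*N)) ≤ 8*α*(b'*a') := by
    have h := mul_le_mul hb'l2 ha'l2 (by linarith : (0:ℝ) ≤ 66/100*N) (by linarith : (0:ℝ) ≤ b')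
    calc 8*α*((33/100*N)*(66/100*N)) = (8*α)*((33/100*N)*(66/100*N)) := by ring
    _ ≤ (8*α)*(b'*a') := mul_le_mul_of_nonneg_left h (by linarith)
    _ = 8*α*(b'*a') := by ring
  linarith [t1, t2, t3, t4, mul_nonneg (mul_nonneg hα0.le hN0.le) hN0.le]

set_option maxHeartbeats 2000000 in
/-- cleaning up an extremal coloring (Claim 2.11 of the paper). The red
graph is `R`, the blue graph is `Rᶜ`; the partition is `A ∪ Aᶜ` (with `A` playing the
role of `V` and `Aᶜ` the role of `U`). -/
theorem updated_extremal_coloring (α : ℝ) (hα0 : 0 < α) (hα : α ≤ 1 / 10 ^ 5) :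
    ∃ n₀ : ℕ, ∀ n : ℕ, n₀ ≤ n → ∀ R : SimpleGraph (Fin n), ∀ A : Finset (Fin n),
      (2 / 3 - α) * n ≤ (A.card : ℝ) →
      (1 / 3 - α) * n ≤ ((Aᶜ).card : ℝ) →
      1 - α ≤ dens R A A →
      1 - α ≤ dens Rᶜ Aᶜ A →
      ∃ A' : Finset (Fin n),
        (2 / 3 - 3 * α) * n ≤ (A'.card : ℝ) ∧
        (1 / 3 - 2 * α) * n ≤ ((A'ᶜ).card : ℝ) ∧
        (∀ v ∈ A', (2 / 3 - 4 * α) * A'.card ≤ (nbrCount R v A' : ℝ)) ∧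
        1 - 8 * α ≤ dens Rᶜ A'ᶜ A' ∧
        (∀ u ∈ A'ᶜ, (1 / 3 - 4 * α) * A'.card ≤ (nbrCount Rᶜ u A' : ℝ)) := by
  
  classical
  refine ⟨⌈α⁻¹⌉₊ ^ 3, ?_⟩
  intro n hn R A hA1 hA2 hdR hdB
  set N : ℝ := (n : ℝ) with hN
  have hn3 : (1:ℝ) ≤ α ^ 3 * N := by
    have h1 : (α⁻¹:ℝ) ≤ ⌈α⁻¹⌉₊ := Nat.le_ceil _
    have h2 : ((⌈α⁻¹⌉₊ : ℕ) : ℝ) ^ 3 ≤ N := by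
      rw [hN]
      exact_mod_cast hn
    have h3 : (α⁻¹:ℝ) ^ 3 ≤ N := le_trans (pow_le_pow_left₀ (by positivity) h1 3) h2
    calc (1:ℝ) = α ^ 3 * (α⁻¹) ^ 3 := by field_simp
    _ ≤ α ^ 3 * N := by nlinarith [pow_pos hα0 3]
  have hαN : (10:ℝ)^10 ≤ α * N := by nlinarith [pow_pos hα0 3, sq_nonneg α, mul_pos hα0 hα0]
  have hN1 : (10:ℝ)^15 ≤ N := by nlinarith [pow_pos hα0 3]
  set aN : ℕ := A.card with haN
  set a : ℝ := (aN : ℝ) with ha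
  have haNn : aN ≤ n := by
    simpa using Finset.card_le_card (Finset.subset_univ A)
  have hcompl : ((Aᶜ).card : ℝ) = N - a := by
    rw [Finset.card_compl, Fintype.card_fin]
    push_cast [show #A ≤ n from haNn]
    ring
  rw [hcompl] at hA2
  have haU : (2/3 - α) * N ≤ a := hA1
  have hu_le : N - a ≤ (1/3 + α) * N := by nlinarith
  have ha_le : a ≤ (2/3 + α) * N := by nlinarith
  have hu_ge : (1/3 - α) * N ≤ N - a := by nlinarith
  have ha_pos : (0:ℝ) < a := by nlinarith
  have hu_pos : (0:ℝ) < N - a := by nlinarith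
  have ha3 : (3:ℝ) < a := by
    nlinarith [mul_nonneg (by linarith : (0:ℝ) ≤ 2/3 - α - 6/10) (by nlinarith : (0:ℝ) ≤ N)]
  -- degree function
  set D : Fin n → ℕ := fun x => (A.filter (R.Adj x)).card with hD
  set A' : Finset (Fin n) := univ.filter (fun x => 2 * aN ≤ 3 * D x) with hA'
  set O : Finset (Fin n) := A \ A' with hO
  set Mv : Finset (Fin n) := Aᶜ ∩ A' with hMv
  set o : ℕ := O.card with ho
  set m : ℕ := Mv.card with hm
  -- red degree sum over A
  have heR : (1 - α) * (a * a) ≤ (eCnt R A A : ℝ) := by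
    have h := hdR
    rw [_root_.dens, ← haN, ← ha] at h
    exact (le_div_iff₀ (mul_pos ha_pos ha_pos)).mp h
  
  -- red degree bounded by |A| - 1
  have hsumA : eCnt R A A = ∑ v ∈ A, D v := eCnt_eq_sum R A A
  have hDle : ∀ v ∈ A, D v + 1 ≤ aN := by
    intro v hv
    have h1 : A.filter (R.Adj v) ⊆ A.erase v := by
      intro y hy
      rw [Finset.mem_filter] at hy
      exact Finset.mem_erase.mpr ⟨hy.2.ne', hy.1⟩
    have h2 : D v ≤ #A - 1 := by
      have := Finset.card_le_card h1
      rwa [Finset.card_erase_of_mem hv] at this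
    have h3 : 0 < #A := Finset.card_pos.mpr ⟨v, hv⟩
    rw [haN]
    omega
  have hOsub : O ⊆ A := Finset.sdiff_subset
  have hoA : o ≤ aN := Finset.card_le_card hOsub
  have hObound : ∀ v ∈ O, 3 * D v + 1 ≤ 2 * aN := by
    intro v hv
    rw [hO, Finset.mem_sdiff, hA', Finset.mem_filter] at hv
    have : ¬ (2 * aN ≤ 3 * D v) := fun h => hv.2 ⟨Finset.mem_univ v, h⟩
    omega
  have hs2 : 3 * (∑ v ∈ O, D v) + o ≤ 2 * aN * o := by
    have e1 : ∑ v ∈ O, (3 * D v + 1) = 3 * (∑ v ∈ O, D v) + o := by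
      rw [Finset.sum_add_distrib, ← Finset.mul_sum, Finset.sum_const, smul_eq_mul, mul_one, ho]
    have e2 : ∑ v ∈ O, (3 * D v + 1) ≤ ∑ _v ∈ O, 2 * aN := Finset.sum_le_sum hObound
    rw [e1, Finset.sum_const, smul_eq_mul] at e2
    calc 3 * (∑ v ∈ O, D v) + o ≤ #O * (2 * aN) := e2
    _ = 2 * aN * o := by rw [ho]; ring
  have hs1 : (∑ v ∈ A \ O, D v) + #(A \ O) ≤ #(A \ O) * aN := by
    have e1 : ∑ v ∈ A \ O, (D v + 1) = (∑ v ∈ A \ O, D v) + #(A \ O) := by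
      rw [Finset.sum_add_distrib, Finset.sum_const, smul_eq_mul, mul_one]
    have e2 : ∑ v ∈ A \ O, (D v + 1) ≤ ∑ _v ∈ A \ O, aN :=
      Finset.sum_le_sum (fun v hv => hDle v (Finset.mem_sdiff.mp hv).1)
    rw [e1, Finset.sum_const, smul_eq_mul] at e2
    exact e2
  have hcardAO : (#(A \ O) : ℝ) = a - o := by
    rw [Finset.card_sdiff_of_subset hOsub, Nat.cast_sub (show #O ≤ #A from hoA), ha, ho, haN]
  -- bound on o (real)
  have hs2r : 3 * (∑ v ∈ O, (D v : ℝ)) + (o : ℝ) ≤ 2 * a * o := by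
    rw [ha]
    exact_mod_cast hs2
  have hs1r : (∑ v ∈ A \ O, (D v : ℝ)) + (a - o) ≤ (a - o) * a := by
    rw [← hcardAO, ha]
    exact_mod_cast hs1
  have hsum_split : (∑ v ∈ A \ O, (D v : ℝ)) + (∑ v ∈ O, (D v : ℝ)) = (eCnt R A A : ℝ) := by
    rw [hsumA]
    exact_mod_cast Finset.sum_sdiff hOsub
  have hs2nn : (0:ℝ) ≤ ∑ v ∈ O, (D v : ℝ) :=
    Finset.sum_nonneg (fun v _ => Nat.cast_nonneg _)
  have honn : (0:ℝ) ≤ (o:ℝ) := Nat.cast_nonneg _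
  have hkey : (o:ℝ) * (a - 2) ≤ 3 * (α * a * a) - 3 * a := by
    nlinarith [heR, hs2r, hs1r, hsum_split, hs2nn]
  have ho1 : (o : ℝ) ≤ 3 * α * a + 1 := by
    nlinarith [hkey, ha3, hα0, hα, honn]
  
  -- blue side
  have heB : (1 - α) * ((N - a) * a) ≤ (eCnt Rᶜ Aᶜ A : ℝ) := by
    have h := hdB
    rw [_root_.dens, hcompl, ← haN, ← ha] at h
    exact (le_div_iff₀ (mul_pos hu_pos ha_pos)).mp h
  have hsumB : eCnt Rᶜ Aᶜ A = ∑ u ∈ Aᶜ, #(A.filter (Rᶜ.Adj u)) := eCnt_eq_sum Rᶜ Aᶜ A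
  have hpt : ∀ u : Fin n, D u + #(A.filter (Rᶜ.Adj u)) ≤ aN := by
    intro u
    have hdisj : Disjoint (A.filter (R.Adj u)) (A.filter (Rᶜ.Adj u)) := by
      rw [Finset.disjoint_left]
      intro y hy1 hy2
      rw [Finset.mem_filter] at hy1 hy2
      have h2 := hy2.2
      rw [SimpleGraph.compl_adj] at h2
      exact h2.2 hy1.2
    have hunion : D u + #(A.filter (Rᶜ.Adj u)) = #((A.filter (R.Adj u)) ∪ (A.filter (Rᶜ.Adj u))) :=
      (Finset.card_union_of_disjoint hdisj).symm
    rw [hunion, haN]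
    exact Finset.card_le_card (Finset.union_subset (Finset.filter_subset _ _) (Finset.filter_subset _ _))
  have hDsumAc : (∑ u ∈ Aᶜ, (D u : ℝ)) ≤ α * (N - a) * a := by
    have h1 : (∑ u ∈ Aᶜ, D u) + eCnt Rᶜ Aᶜ A ≤ #Aᶜ * aN := by
      rw [hsumB, ← Finset.sum_add_distrib]
      calc ∑ u ∈ Aᶜ, (D u + #(A.filter (Rᶜ.Adj u))) ≤ ∑ _u ∈ Aᶜ, aN :=
            Finset.sum_le_sum (fun u _ => hpt u)
      _ = #Aᶜ * aN := by rw [Finset.sum_const, smul_eq_mul]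
    have h1r : (∑ u ∈ Aᶜ, (D u:ℝ)) + (eCnt Rᶜ Aᶜ A : ℝ) ≤ (N - a) * a := by
      rw [← hcompl, ha]
      exact_mod_cast h1
    linarith [heB]
  -- M bound
  have hMsub : Mv ⊆ Aᶜ := Finset.inter_subset_left
  have hms : 2 * aN * m ≤ 3 * ∑ u ∈ Aᶜ, D u := by
    have h1 : ∀ x ∈ Mv, 2 * aN ≤ 3 * D x := by
      intro x hx
      rw [hMv, Finset.mem_inter, hA', Finset.mem_filter] at hx
      exact hx.2.2
    calc 2 * aN * m = ∑ _x ∈ Mv, 2 * aN := by rw [Finset.sum_const, smul_eq_mul, hm]; ring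
    _ ≤ ∑ x ∈ Mv, 3 * D x := Finset.sum_le_sum h1
    _ ≤ ∑ x ∈ Aᶜ, 3 * D x := Finset.sum_le_sum_of_subset hMsub
    _ = 3 * ∑ u ∈ Aᶜ, D u := by rw [Finset.mul_sum]
  have hm1 : (m:ℝ) ≤ 3/2 * α * (N - a) := by
    refine keyM α a (N - a) m (∑ u ∈ Aᶜ, (D u:ℝ)) ?_ hDsumAc ha_pos (Nat.cast_nonneg m)
    rw [ha]
    exact_mod_cast hms
  -- structure of A'
  have hAOsubA' : A \ O ⊆ A' := by
    intro x hx
    rw [Finset.mem_sdiff, hO, Finset.mem_sdiff] at hx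
    rcases hx with ⟨hxA, hx2⟩
    by_contra hxA'
    exact hx2 ⟨hxA, hxA'⟩
  have hA'subUnion : A' ⊆ (A \ O) ∪ Mv := by
    intro x hx
    by_cases hxA : x ∈ A
    · refine Finset.mem_union_left _ (Finset.mem_sdiff.mpr ⟨hxA, ?_⟩)
      rw [hO, Finset.mem_sdiff]
      exact fun h => h.2 hx
    · refine Finset.mem_union_right _ ?_
      rw [hMv, Finset.mem_inter]
      exact ⟨Finset.mem_compl.mpr hxA, hx⟩
  have ha'low : a - o ≤ (#A' : ℝ) := by
    rw [← hcardAO]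
    exact_mod_cast Finset.card_le_card hAOsubA'
  have ha'high : (#A' : ℝ) ≤ a - o + m := by
    have h := (Finset.card_le_card hA'subUnion).trans (Finset.card_union_le _ _)
    have hr : (#A' : ℝ) ≤ (#(A \ O) : ℝ) + (#Mv : ℝ) := by exact_mod_cast h
    rw [hcardAO, ← hm] at hr
    exact hr
  have ha'n : #A' ≤ n := by simpa using Finset.card_le_card (Finset.subset_univ A')
  have hb'compl : ((A'ᶜ).card : ℝ) = N - (#A' : ℝ) := by
    rw [Finset.card_compl, Fintype.card_fin]
    push_cast [ha'n]
    ring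
  -- common numeric facts
  have honn : (0:ℝ) ≤ (o:ℝ) := Nat.cast_nonneg _
  have hmnn : (0:ℝ) ≤ (m:ℝ) := Nat.cast_nonneg _
  obtain ⟨hob2, hmb2, hN0⟩ := gArith α N a (o:ℝ) (m:ℝ) hα0 hα hαN haU ha_le honn ho1 hmnn hm1
  have hα3N : (1:ℝ) ≤ α*(α*(α*N)) := by nlinarith [hn3]
  have hG1 : (2/3 - 3*α) * N ≤ (#A' : ℝ) :=
    le_trans (g1Arith α N a (o:ℝ) hα0 hα hαN hα3N haU ho1) ha'low
  have hG2 : (1/3 - 2*α) * N ≤ ((A'ᶜ).card : ℝ) := by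
    rw [hb'compl]
    exact g2Arith α N a (o:ℝ) (m:ℝ) (#A' : ℝ) hα0 hα hu_ge hαN honn hm1 ha'high
  refine ⟨A', hG1, hG2, ?_, ?_, ?_⟩
  · -- red degrees in A'
    intro v hv
    rw [nbrCount_eq_card]
    have hv' : 2 * aN ≤ 3 * D v := by
      rw [hA', Finset.mem_filter] at hv
      exact hv.2
    have hsub : A.filter (R.Adj v) ⊆ (A'.filter (R.Adj v)) ∪ O := by
      intro y hy
      rw [Finset.mem_filter] at hy
      by_cases hyA' : y ∈ A'
      · exact Finset.mem_union_left _ (Finset.mem_filter.mpr ⟨hyA', hy.2⟩)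
      · refine Finset.mem_union_right _ ?_
        rw [hO, Finset.mem_sdiff]
        exact ⟨hy.1, hyA'⟩
    have hcard : D v ≤ #(A'.filter (R.Adj v)) + #O :=
      (Finset.card_le_card hsub).trans (Finset.card_union_le _ _)
    have hnbrR : 2/3 * a - o ≤ (#(A'.filter (R.Adj v)) : ℝ) := by
      have hDv : 2 * a ≤ 3 * (D v:ℝ) := by rw [ha]; exact_mod_cast hv'
      have hc : (D v : ℝ) ≤ (#(A'.filter (R.Adj v)) : ℝ) + (o : ℝ) := by
        rw [ho]
        exact_mod_cast hcard
      linarith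
    exact g3Arith α N a (o:ℝ) (m:ℝ) (#A' : ℝ) _ hα0 hα hαN haU honn hob2 hmnn hmb2 ha'high hnbrR
  · -- blue density
    have hNpos : (0:ℝ) < N := by linarith only [hN1]
    have hG1' : (0:ℝ) < (#A' : ℝ) := by
      have h1 : (0:ℝ) < (2/3 - 3*α) * N :=
        mul_pos (by linarith only [hα, hα0] : (0:ℝ) < 2/3 - 3*α) hNpos
      linarith only [hG1, h1]
    have hG2' : (0:ℝ) < ((A'ᶜ).card : ℝ) := by
      have h1 : (0:ℝ) < (1/3 - 2*α) * N :=
        mul_pos (by linarith only [hα, hα0] : (0:ℝ) < 1/3 - 2*α) hNpos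
      linarith only [hG2, h1]
    rw [_root_.dens, le_div_iff₀ (mul_pos hG2' hG1')]
    have hsumB' : eCnt Rᶜ A'ᶜ A' = ∑ u ∈ A'ᶜ, #(A'.filter (Rᶜ.Adj u)) := eCnt_eq_sum Rᶜ A'ᶜ A'
    have hptB : ∀ u ∈ A'ᶜ, #A' ≤ #(A'.filter (Rᶜ.Adj u)) + (D u + m) := by
      intro u hu
      rw [Finset.mem_compl] at hu
      have hsub : A' ⊆ (A'.filter (Rᶜ.Adj u)) ∪ ((A.filter (R.Adj u)) ∪ Mv) := by
        intro y hy
        by_cases hadj : Rᶜ.Adj u y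
        · exact Finset.mem_union_left _ (Finset.mem_filter.mpr ⟨hy, hadj⟩)
        · rw [SimpleGraph.compl_adj] at hadj
          push_neg at hadj
          by_cases he : u = y
          · exact absurd (he ▸ hy) hu
          · refine Finset.mem_union_right _ ?_
            by_cases hyA : y ∈ A
            · exact Finset.mem_union_left _ (Finset.mem_filter.mpr ⟨hyA, hadj he⟩)
            · refine Finset.mem_union_right _ ?_
              rw [hMv, Finset.mem_inter]
              exact ⟨Finset.mem_compl.mpr hyA, hy⟩
      calc #A' ≤ #(A'.filter (Rᶜ.Adj u)) + #((A.filter (R.Adj u)) ∪ Mv) :=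
            (Finset.card_le_card hsub).trans (Finset.card_union_le _ _)
      _ ≤ #(A'.filter (Rᶜ.Adj u)) + (D u + m) := by
          refine Nat.add_le_add_left ?_ _
          rw [hm]
          exact Finset.card_union_le _ _
    have hsum1 : #(A'ᶜ) * #A' ≤ (eCnt Rᶜ A'ᶜ A') + ((∑ u ∈ A'ᶜ, D u) + #(A'ᶜ) * m) := by
      rw [hsumB']
      calc #(A'ᶜ) * #A' = ∑ _u ∈ A'ᶜ, #A' := by rw [Finset.sum_const, smul_eq_mul]
      _ ≤ ∑ u ∈ A'ᶜ, (#(A'.filter (Rᶜ.Adj u)) + (D u + m)) := Finset.sum_le_sum hptB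
      _ = _ := by rw [Finset.sum_add_distrib, Finset.sum_add_distrib, Finset.sum_const, smul_eq_mul]
    have hsub2 : A'ᶜ ⊆ Aᶜ ∪ O := by
      intro x hx
      rw [Finset.mem_compl] at hx
      by_cases hxA : x ∈ A
      · refine Finset.mem_union_right _ ?_
        rw [hO, Finset.mem_sdiff]
        exact ⟨hxA, hx⟩
      · exact Finset.mem_union_left _ (Finset.mem_compl.mpr hxA)
    have hdisj2 : Disjoint Aᶜ O := by
      rw [Finset.disjoint_left]
      intro x hx hxO
      exact (Finset.mem_compl.mp hx) (hOsub hxO)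
    have hsum2 : (∑ u ∈ A'ᶜ, D u) ≤ (∑ u ∈ Aᶜ, D u) + (∑ v ∈ O, D v) := by
      calc ∑ u ∈ A'ᶜ, D u ≤ ∑ u ∈ Aᶜ ∪ O, D u :=
            Finset.sum_le_sum_of_subset hsub2
      _ = _ := Finset.sum_union hdisj2
    have hsum1r : ((A'ᶜ).card:ℝ) * (#A':ℝ) ≤ (eCnt Rᶜ A'ᶜ A' : ℝ) + ((∑ u ∈ A'ᶜ, (D u:ℝ)) + ((A'ᶜ).card:ℝ) * m) := by
      exact_mod_cast hsum1
    have hsum2r : (∑ u ∈ A'ᶜ, (D u:ℝ)) ≤ α*(N-a)*a + (2*a*(o:ℝ))/3 := by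
      have hO3 : (∑ v ∈ O, (D v:ℝ)) ≤ (2*a*(o:ℝ))/3 := by linarith [hs2r, honn]
      have h2r : (∑ u ∈ A'ᶜ, (D u:ℝ)) ≤ (∑ u ∈ Aᶜ, (D u:ℝ)) + (∑ v ∈ O, (D v:ℝ)) := by
        exact_mod_cast hsum2
      linarith [hDsumAc]
    have hb'l : (N - a) - m ≤ ((A'ᶜ).card:ℝ) := by
      rw [hb'compl]
      linarith [ha'high]
    have hb'u : ((A'ᶜ).card:ℝ) ≤ (N - a) + o := by
      rw [hb'compl]
      linarith [ha'low]
    have hkey5 : α*(N-a)*a + (2*a*(o:ℝ))/3 + ((A'ᶜ).card:ℝ)*m ≤ 8*α*(((A'ᶜ).card:ℝ)*(#A':ℝ)) :=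
      g5Arith α N a (o:ℝ) (m:ℝ) (#A':ℝ) ((A'ᶜ).card:ℝ) hα0 hα hαN haU ha_le hu_ge hu_le honn hob2 hmnn hmb2 hb'l hb'u ha'low
    linarith only [hsum1r, hsum2r, hkey5]
  · -- blue degrees from A'ᶜ
    intro u hu
    rw [Finset.mem_compl] at hu
    rw [nbrCount_eq_card]
    have hDu : 3 * D u + 1 ≤ 2 * aN := by
      have h1 : ¬ (2 * aN ≤ 3 * D u) := by
        intro h
        exact hu (by rw [hA', Finset.mem_filter]; exact ⟨Finset.mem_univ u, h⟩)
      omega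
    have hsub : A \ O ⊆ (A'.filter (Rᶜ.Adj u)) ∪ (A.filter (R.Adj u)) := by
      intro y hy
      have hyA' : y ∈ A' := hAOsubA' hy
      by_cases hadj : R.Adj u y
      · exact Finset.mem_union_right _ (Finset.mem_filter.mpr ⟨(Finset.mem_sdiff.mp hy).1, hadj⟩)
      · refine Finset.mem_union_left _ (Finset.mem_filter.mpr ⟨hyA', ?_⟩)
        rw [SimpleGraph.compl_adj]
        exact ⟨fun he => hu (he ▸ hyA'), hadj⟩
    have hcard : #(A \ O) ≤ #(A'.filter (Rᶜ.Adj u)) + D u :=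
      (Finset.card_le_card hsub).trans (Finset.card_union_le _ _)
    have hnbrB : 1/3 * a - o ≤ (#(A'.filter (Rᶜ.Adj u)) : ℝ) := by
      have hDv : 3 * (D u:ℝ) + 1 ≤ 2 * a := by rw [ha]; exact_mod_cast hDu
      have hc : a - o ≤ (#(A'.filter (Rᶜ.Adj u)) : ℝ) + (D u : ℝ) := by
        rw [← hcardAO]
        exact_mod_cast hcard
      linarith
    exact g4Arith α N a (o:ℝ) (m:ℝ) (#A' : ℝ) _ hα0 hα hαN haU honn hob2 hmnn hmb2 ha'high hnbrB
end
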